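/- arXiv:1509.03885 — 6 statements merged into one kernel-verified Lean document; each statement's English description precedes it below -/
import Mathlib

section
/- Let Λ be a unimodular lattice in ℝ^d with dual lattice Λ* = {s ∈ ℝ^d : r·s ∈ ℤ for all r ∈ Λ}, and let V ≤ ℝ^d be a subspace such that Λ ∩ V is a full-rank lattice in V, with orthogonal complement V^⊥. Then, with respect to the Euclidean norm, ω_k · Covol(Λ∩V) = ω_{d−k} · Covol(Λ* ∩ V^⊥), where k = dim V and ω_j denotes the volume of the Euclidean unit ball in ℝ^j, and Covol denotes covolume normalized so that the unit ball in the respective subspace has measure 1. -/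
/-!
Choose a basis `b` of `Λ` whose first `k` vectors form a basis of `Λ ∩ V`; this is possible
because `Λ ∩ V` is saturated in `Λ` (Smith normal form). In an orthonormal basis adapted to
`V ⊕ V^⊥` the matrix of `b` is block upper triangular, so `1 = Covol Λ = |det A| |det P|`, where
`A` is the matrix of the first `k` vectors in `V` and `P` that of the projections `p_j` of the
remaining ones to `V^⊥`. A vector of `V^⊥` pairs integrally with `Λ` iff it pairs integrally
with every `p_j`, so `Λ* ∩ V^⊥` is spanned by the dual basis of `(p_j)`, whose covolume is
`1 / |det P| = |det A| = Covol (Λ ∩ V)`.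
-/

open MeasureTheory
open scoped RealInnerProductSpace

/-- The dual lattice `Λ* = {s : r·s ∈ ℤ for all r ∈ Λ}`. -/
noncomputable def dualLattice {d : ℕ} (Λ : AddSubgroup (EuclideanSpace ℝ (Fin d))) :
    AddSubgroup (EuclideanSpace ℝ (Fin d)) where
  carrier := {s | ∀ r ∈ Λ, ∃ k : ℤ, ⟪r, s⟫ = (k : ℝ)}
  add_mem' := by
    intro a b ha hb r hr
    obtain ⟨k, hk⟩ := ha r hr
    obtain ⟨l, hl⟩ := hb r hr
    exact ⟨k + l, by rw [inner_add_right, hk, hl]; push_cast; ring⟩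
  zero_mem' := fun r _ => ⟨0, by simp⟩
  neg_mem' := by
    intro a ha r hr
    obtain ⟨k, hk⟩ := ha r hr
    exact ⟨-k, by rw [inner_neg_right, hk]; push_cast; ring⟩

open Module Submodule
open scoped Matrix ENNReal Pointwise

universe u

theorem Submodule.exists_basis_extending_of_saturated {R : Type*} {M : Type u} [CommRing R]
    [IsDomain R] [IsPrincipalIdealRing R] [AddCommGroup M] [Module R M] [Module.Free R M]
    [Module.Finite R M]
    (N : Submodule R M) (hN : ∀ (a : R) (x : M), a ≠ 0 → a • x ∈ N → x ∈ N) :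
    ∃ (n : ℕ) (κ : Type u) (_ : Fintype κ) (B : Basis (Fin n ⊕ κ) R M),
      span R (Set.range (B ∘ Sum.inl)) = N := by
  obtain ⟨n, snf⟩ := N.smithNormalForm (Module.Free.chooseBasis R M)
  have hmem : ∀ i, snf.bM (snf.f i) ∈ N := fun i ↦ by
    have hbN := snf.snf i
    refine hN (snf.a i) _ (fun h ↦ snf.bN.ne_zero i ?_) (hbN ▸ (snf.bN i).2)
    ext; rw [hbN, h, zero_smul, N.coe_zero]
  let e : Fin n ⊕ ↥(Set.range snf.f)ᶜ ≃ Module.Free.ChooseBasisIndex R M :=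
    (Equiv.sumCongr (Equiv.ofInjective _ snf.f.injective) (Equiv.refl _)).trans
      (Equiv.Set.sumCompl _)
  refine ⟨n, _, inferInstance, snf.bM.reindex e.symm, le_antisymm ?_ ?_⟩
  · rw [span_le]
    rintro _ ⟨i, rfl⟩
    simpa [e] using hmem i
  · have hN' : N = map N.subtype (span R (Set.range snf.bN)) := by
      rw [snf.bN.span_eq, map_top, range_subtype]
    refine hN'.trans_le ?_
    rw [map_span, span_le]
    rintro _ ⟨_, ⟨i, rfl⟩, rfl⟩
    rw [N.subtype_apply, snf.snf i]
    exact smul_mem _ _ (subset_span ⟨i, by simp [e]⟩)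

theorem ZLattice.exists_adapted_basis {E : Type u} [NormedAddCommGroup E] [NormedSpace ℝ E]
    [FiniteDimensional ℝ E] (L : Submodule ℤ E) [DiscreteTopology L] [IsZLattice ℝ L]
    (V : Submodule ℝ E) (hV : span ℝ (L.comap (V.subtype.restrictScalars ℤ) : Set V) = ⊤) :
    ∃ (n : ℕ) (κ : Type u) (_ : Fintype κ) (bV : Basis (Fin n) ℝ V) (b : Basis (Fin n ⊕ κ) ℝ E),
      span ℤ (Set.range b) = L ∧ span ℤ (Set.range bV) = L.comap (V.subtype.restrictScalars ℤ) ∧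
      ∀ i, b (Sum.inl i) = bV i := by
  let N := (V.restrictScalars ℤ).comap L.subtype
  obtain ⟨n, κ, _, B, hB⟩ := N.exists_basis_extending_of_saturated fun a x ha hax ↦ by
    rw [mem_comap, map_zsmul, restrictScalars_mem, ← Int.cast_smul_eq_zsmul ℝ] at hax
    exact (V.smul_mem_iff (Int.cast_ne_zero.mpr ha)).mp hax
  let b := B.ofZLatticeBasis ℝ L
  have hb : ∀ i, b i = B i := B.ofZLatticeBasis_apply ℝ L
  have hbV : ∀ i, b (Sum.inl i) ∈ V := fun i ↦ by
    rw [hb]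
    exact (hB ▸ subset_span ⟨i, rfl⟩ : B (Sum.inl i) ∈ N)
  let v : Fin n → V := fun i ↦ ⟨b (Sum.inl i), hbV i⟩
  have hli : LinearIndependent ℝ v :=
    LinearIndependent.of_comp V.subtype (b.linearIndependent.comp _ Sum.inl_injective)
  have hspanℤ : span ℤ (Set.range v) = L.comap (V.subtype.restrictScalars ℤ) := by
    apply map_injective_of_injective (f := V.subtype.restrictScalars ℤ) Subtype.val_injective
    have himg : V.subtype.restrictScalars ℤ '' Set.range v =
        L.subtype '' Set.range (B ∘ Sum.inl) := by
      simp only [← Set.range_comp]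
      exact congrArg Set.range (funext fun i ↦ hb (Sum.inl i))
    rw [map_span, himg, ← map_span, hB, map_comap_eq, map_comap_eq, range_subtype,
      LinearMap.range_restrictScalars, range_subtype, inf_comm]
  have hspanℝ : span ℝ (Set.range v) = ⊤ := by
    rw [← span_span_of_tower ℤ, hspanℤ, hV]
  refine ⟨n, κ, inferInstance, Basis.mk hli hspanℝ.ge, b, B.ofZLatticeBasis_span ℝ L, ?_,
    fun i ↦ by rw [Basis.mk_apply]⟩
  rwa [Basis.coe_mk]

section InnerDualBasis

variable {F : Type*} [NormedAddCommGroup F] [InnerProductSpace ℝ F]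
  {ι : Type*} [Fintype ι] [DecidableEq ι]

theorem innerₗ_nondegenerate : (innerₗ F : LinearMap.BilinForm ℝ F).Nondegenerate :=
  ⟨fun _ hx ↦ inner_self_eq_zero.mp (hx _), fun _ hx ↦ inner_self_eq_zero.mp (hx _)⟩

noncomputable def Module.Basis.innerDualBasis (b : Basis ι ℝ F) : Basis ι ℝ F :=
  LinearMap.BilinForm.dualBasis (innerₗ F) innerₗ_nondegenerate b

theorem Module.Basis.innerDualBasis_repr_apply (b : Basis ι ℝ F) (x : F) (i : ι) :
    b.innerDualBasis.repr x i = ⟪b i, x⟫ := by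
  rw [innerDualBasis, LinearMap.BilinForm.dualBasis_repr_apply, real_inner_comm]
  rfl

theorem Module.Basis.inner_innerDualBasis (b : Basis ι ℝ F) (i j : ι) :
    ⟪b i, b.innerDualBasis j⟫ = if i = j then 1 else 0 := by
  rw [real_inner_comm, eq_comm,
    ← LinearMap.BilinForm.apply_dualBasis_left (B := innerₗ F) innerₗ_nondegenerate]
  rfl

theorem Module.Basis.mem_span_innerDualBasis_iff (b : Basis ι ℝ F) (s : F) :
    s ∈ span ℤ (Set.range b.innerDualBasis) ↔ ∀ i, ∃ k : ℤ, ⟪b i, s⟫ = k := by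
  simp only [b.innerDualBasis.mem_span_iff_repr_mem ℤ, b.innerDualBasis_repr_apply,
    Set.mem_range, algebraMap_int_eq, eq_intCast]
  exact forall_congr' fun _ ↦ exists_congr fun _ ↦ eq_comm

theorem OrthonormalBasis.det_mul_det_innerDualBasis (e : OrthonormalBasis ι ℝ F)
    (b : Basis ι ℝ F) : e.toBasis.det b * e.toBasis.det b.innerDualBasis = 1 := by
  have htranspose : (e.toBasis.toMatrix b)ᵀ * e.toBasis.toMatrix b.innerDualBasis = 1 := by
    ext i j
    simp only [Matrix.mul_apply, Matrix.transpose_apply, Basis.toMatrix_apply,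
      e.coe_toBasis_repr_apply, e.repr_apply_apply, Matrix.one_apply]
    rw [← b.inner_innerDualBasis, ← e.sum_inner_mul_inner]
    simp_rw [real_inner_comm (e _) (b i)]
  rw [Basis.det_apply, Basis.det_apply, ← Matrix.det_transpose, ← Matrix.det_mul, htranspose,
    Matrix.det_one]

end InnerDualBasis

namespace OrthonormalBasis

variable {E : Type*} [NormedAddCommGroup E] [InnerProductSpace ℝ E] {ι κ : Type*}
  [Fintype ι] [Fintype κ]

theorem le_span_range_coe {W : Submodule ℝ E} (e : OrthonormalBasis ι ℝ W) :
    W ≤ span ℝ (Set.range fun i ↦ (e i : E)) := fun x hx ↦ by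
  have hsum := congrArg Subtype.val (e.sum_repr' ⟨x, hx⟩)
  rw [coe_sum] at hsum
  rw [← show (⟨x, hx⟩ : W).val = x from rfl, ← hsum]
  exact sum_mem fun i _ ↦ smul_mem _ _ (subset_span ⟨i, rfl⟩)

variable (K : Submodule ℝ E)

theorem orthonormal_sum_elim_orthogonal (e₁ : OrthonormalBasis ι ℝ K)
    (e₂ : OrthonormalBasis κ ℝ Kᗮ) :
    Orthonormal ℝ (Sum.elim (fun i ↦ (e₁ i : E)) fun j ↦ (e₂ j : E)) := by
  classical
  rw [orthonormal_iff_ite]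
  rintro (i | j) (i' | j')
  · simpa [← coe_inner] using orthonormal_iff_ite.mp e₁.orthonormal i i'
  · simpa using inner_right_of_mem_orthogonal (e₁ i).2 (e₂ j').2
  · simpa using inner_left_of_mem_orthogonal (e₁ i').2 (e₂ j).2
  · simpa [← coe_inner] using orthonormal_iff_ite.mp e₂.orthonormal j j'

variable [K.HasOrthogonalProjection]

theorem top_le_span_sum_elim_orthogonal (e₁ : OrthonormalBasis ι ℝ K)
    (e₂ : OrthonormalBasis κ ℝ Kᗮ) :
    ⊤ ≤ span ℝ (Set.range (Sum.elim (fun i ↦ (e₁ i : E)) fun j ↦ (e₂ j : E))) := by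
  rw [Set.Sum.elim_range, span_union, ← K.sup_orthogonal_of_hasOrthogonalProjection]
  exact sup_le_sup e₁.le_span_range_coe e₂.le_span_range_coe

noncomputable def sumOrthogonal (e₁ : OrthonormalBasis ι ℝ K) (e₂ : OrthonormalBasis κ ℝ Kᗮ) :
    OrthonormalBasis (ι ⊕ κ) ℝ E :=
  .mk (orthonormal_sum_elim_orthogonal K e₁ e₂) (top_le_span_sum_elim_orthogonal K e₁ e₂)

@[simp]
theorem coe_sumOrthogonal (e₁ : OrthonormalBasis ι ℝ K) (e₂ : OrthonormalBasis κ ℝ Kᗮ) :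
    ⇑(sumOrthogonal K e₁ e₂) = Sum.elim (fun i ↦ (e₁ i : E)) fun j ↦ (e₂ j : E) :=
  OrthonormalBasis.coe_mk _ _

theorem det_sumOrthogonal [DecidableEq ι] [DecidableEq κ] (e₁ : OrthonormalBasis ι ℝ K)
    (e₂ : OrthonormalBasis κ ℝ Kᗮ) (b : ι ⊕ κ → E) (b₁ : ι → K) (hb : ∀ i, b (.inl i) = b₁ i) :
    (sumOrthogonal K e₁ e₂).toBasis.det b =
      e₁.toBasis.det b₁ * e₂.toBasis.det fun j ↦ Kᗮ.orthogonalProjectionOnto (b (.inr j)) := by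
  have hblocks : (sumOrthogonal K e₁ e₂).toBasis.toMatrix b =
      Matrix.fromBlocks (e₁.toBasis.toMatrix b₁) (.of fun i j ↦ ⟪(e₁ i : E), b (.inr j)⟫) 0
        (e₂.toBasis.toMatrix fun j ↦ Kᗮ.orthogonalProjectionOnto (b (.inr j))) := by
    ext (i | j) (i' | j') <;> simp [Basis.toMatrix_apply, OrthonormalBasis.repr_apply_apply, hb]
    exact inner_left_of_mem_orthogonal (b₁ i').2 (e₂ j).2
  rw [Basis.det_apply, hblocks, Matrix.det_fromBlocks_zero₂₁, Basis.det_apply, Basis.det_apply]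

theorem exists_basis_abs_det_innerDualBasis_eq [DecidableEq ι] [DecidableEq κ]
    (e₁ : OrthonormalBasis ι ℝ K) (e₂ : OrthonormalBasis κ ℝ Kᗮ) (b : ι ⊕ κ → E) (b₁ : ι → K)
    (hb : ∀ i, b (.inl i) = b₁ i) (hdet : |(sumOrthogonal K e₁ e₂).toBasis.det b| = 1) :
    ∃ p : Basis κ ℝ Kᗮ, (∀ j, p j = Kᗮ.orthogonalProjectionOnto (b (.inr j))) ∧
      |e₁.toBasis.det b₁| = |e₂.toBasis.det p.innerDualBasis| := by
  rw [det_sumOrthogonal K e₁ e₂ b b₁ hb, abs_mul] at hdet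
  obtain ⟨hli, hsp⟩ := e₂.toBasis.is_basis_iff_det.mpr <|
    isUnit_iff_ne_zero.mpr (abs_ne_zero.mp (right_ne_zero_of_mul_eq_one hdet))
  let p := Basis.mk hli hsp.ge
  rw [← Basis.coe_mk hli hsp.ge] at hdet
  refine ⟨p, Basis.mk_apply hli hsp.ge, ?_⟩
  calc |e₁.toBasis.det b₁|
      = |e₁.toBasis.det b₁| * |e₂.toBasis.det p * e₂.toBasis.det p.innerDualBasis| := by
        rw [e₂.det_mul_det_innerDualBasis p, abs_one, mul_one]
    _ = |e₂.toBasis.det p.innerDualBasis| := by rw [abs_mul, ← mul_assoc, hdet, one_mul]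

end OrthonormalBasis

theorem isAddFundamentalDomain_of_tiling {G : Type*} [AddCommGroup G] [TopologicalSpace G]
    [MeasurableSpace G] [MeasurableAdd G] {μ : Measure G} [μ.IsAddLeftInvariant]
    (Γ : AddSubgroup G) {D : Set G} (hmeas : MeasurableSet D)
    (hcover : ∀ x, ∃ r ∈ Γ, x - r ∈ D)
    (hdisj : ∀ r ∈ Γ, r ≠ 0 → interior D ∩ ((r + ·) '' interior D) = ∅)
    (hboundary : μ (D \ interior D) = 0) :
    IsAddFundamentalDomain Γ D μ where
  nullMeasurableSet := hmeas.nullMeasurableSet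
  ae_covers := .of_forall fun x ↦ by
    obtain ⟨r, hr, hxr⟩ := hcover x
    exact ⟨⟨-r, neg_mem hr⟩, by simpa [neg_add_eq_sub] using hxr⟩
  aedisjoint g g' hne := by
    have hsub : (g +ᵥ D) ∩ (g' +ᵥ D) ⊆ (g +ᵥ (D \ interior D)) ∪ (g' +ᵥ (D \ interior D)) := by
      rintro _ ⟨⟨y, hy, rfl⟩, ⟨z, hz, hzy⟩⟩
      by_cases hyi : y ∈ interior D
      · by_cases hzi : z ∈ interior D
        · refine absurd (hdisj _ (sub_mem g'.2 g.2) ?_) (Set.nonempty_iff_ne_empty.mp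
            ⟨y, hyi, z, hzi, ?_⟩)
          · exact sub_ne_zero.mpr fun h ↦ hne (Subtype.ext h).symm
          · change (g' : G) + z = g + y at hzy
            change (g' : G) - g + z = y
            rw [sub_add_eq_add_sub, hzy, add_sub_cancel_left]
        · exact .inr ⟨z, ⟨hz, hzi⟩, hzy⟩
      · exact .inl ⟨y, ⟨hy, hyi⟩, rfl⟩
    refine measure_mono_null hsub (measure_union_null ?_ ?_) <;>
      rwa [measure_vadd]

theorem MeasureTheory.IsAddFundamentalDomain.volume_eq_abs_det {F : Type*}
    [NormedAddCommGroup F] [InnerProductSpace ℝ F] [FiniteDimensional ℝ F] [MeasurableSpace F]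
    [BorelSpace F] {ι : Type*} [Fintype ι] [DecidableEq ι] {b : Basis ι ℝ F} {D : Set F}
    (hD : IsAddFundamentalDomain (span ℤ (Set.range b)).toAddSubgroup D volume)
    (e : OrthonormalBasis ι ℝ F) :
    volume D = ENNReal.ofReal |e.toBasis.det b| := by
  have : Countable (span ℤ (Set.range b)).toAddSubgroup :=
    inferInstanceAs (Countable (span ℤ (Set.range b)))
  rw [← (ZSpan.isAddFundamentalDomain' b volume).measure_eq hD,
    ZSpan.measure_fundamentalDomain b volume e.toBasis,
    measure_congr (ZSpan.fundamentalDomain_ae_parallelepiped _ _), e.coe_toBasis,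
    e.volume_parallelepiped, mul_one]

theorem mem_dualLattice_span_iff {d : ℕ} {ι : Type*} (b : ι → EuclideanSpace ℝ (Fin d))
    (s : EuclideanSpace ℝ (Fin d)) :
    s ∈ dualLattice (span ℤ (Set.range b)).toAddSubgroup ↔ ∀ i, ∃ k : ℤ, ⟪b i, s⟫ = k := by
  refine ⟨fun hs i ↦ hs _ (subset_span ⟨i, rfl⟩), fun hb r hr ↦ ?_⟩
  induction hr using span_induction with
  | mem _ hx => obtain ⟨i, rfl⟩ := hx; exact hb i
  | zero => exact ⟨0, by simp⟩
  | add x y _ _ hx hy =>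
    obtain ⟨k, hk⟩ := hx
    obtain ⟨l, hl⟩ := hy
    exact ⟨k + l, by rw [inner_add_left, hk, hl, Int.cast_add]⟩
  | smul a x _ hx =>
    obtain ⟨k, hk⟩ := hx
    exact ⟨a * k, by rw [← Int.cast_smul_eq_zsmul ℝ, real_inner_smul_left, hk, Int.cast_mul]⟩

theorem comap_orthogonal_dualLattice_eq {d : ℕ} {ι κ : Type*} [Fintype κ] [DecidableEq κ]
    (V : Submodule ℝ (EuclideanSpace ℝ (Fin d))) (b : ι ⊕ κ → EuclideanSpace ℝ (Fin d))
    (hb : ∀ i, b (Sum.inl i) ∈ V) (p : Basis κ ℝ Vᗮ)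
    (hp : ∀ j, p j = Vᗮ.orthogonalProjectionOnto (b (Sum.inr j))) :
    AddSubgroup.comap Vᗮ.subtype.toAddMonoidHom
        (dualLattice (span ℤ (Set.range b)).toAddSubgroup) =
      (span ℤ (Set.range p.innerDualBasis)).toAddSubgroup := by
  ext s
  change (s : EuclideanSpace ℝ (Fin d)) ∈ dualLattice _ ↔ s ∈ span ℤ _
  rw [mem_dualLattice_span_iff, p.mem_span_innerDualBasis_iff, Sum.forall]
  simp only [hp, inner_orthogonalProjectionOnto_eq_of_mem_right]
  refine and_iff_right_of_imp fun _ i ↦ ⟨0, ?_⟩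
  rw [Int.cast_zero]
  exact inner_right_of_mem_orthogonal (hb i) s.2

theorem stmt_8_general (d : ℕ)
    (Λ : AddSubgroup (EuclideanSpace ℝ (Fin d)))
    (hdisc : DiscreteTopology Λ)
    (hspan : Submodule.span ℝ (Λ : Set (EuclideanSpace ℝ (Fin d))) = ⊤)
    (hunimod : ∃ D : Set (EuclideanSpace ℝ (Fin d)), MeasurableSet D ∧
      (∀ x, ∃ r ∈ Λ, x - r ∈ D) ∧
      (∀ r ∈ Λ, r ≠ 0 → interior D ∩ ((r + ·) '' interior D) = ∅) ∧
      volume (D \ interior D) = 0 ∧ volume D = 1)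
    (V : Submodule ℝ (EuclideanSpace ℝ (Fin d)))
    (hfull : Submodule.span ℝ
      ((AddSubgroup.comap (V.subtype.toAddMonoidHom) Λ : AddSubgroup ↥V) : Set ↥V) = ⊤)
    (D₁ : Set ↥V) (D₂ : Set ↥(Vᗮ))
    (hD₁ : IsAddFundamentalDomain (AddSubgroup.comap (V.subtype.toAddMonoidHom) Λ) D₁
      (volume : Measure ↥V))
    (hD₂ : IsAddFundamentalDomain
      (AddSubgroup.comap ((Vᗮ).subtype.toAddMonoidHom) (dualLattice Λ)) D₂
      (volume : Measure ↥(Vᗮ))) :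
    volume (Metric.ball (0 : ↥V) 1) *
        (((volume (Metric.ball (0 : ↥V) 1))⁻¹ • (volume : Measure ↥V)) D₁) =
      volume (Metric.ball (0 : ↥(Vᗮ)) 1) *
        (((volume (Metric.ball (0 : ↥(Vᗮ)) 1))⁻¹ • (volume : Measure ↥(Vᗮ))) D₂) := by
  have hball {W : Submodule ℝ (EuclideanSpace ℝ (Fin d))} :
      volume (Metric.ball (0 : W) 1) ≠ 0 ∧ volume (Metric.ball (0 : W) 1) ≠ ∞ :=
    ⟨(Metric.measure_ball_pos volume 0 one_pos).ne', measure_ball_lt_top.ne⟩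
  simp only [Measure.smul_apply, smul_eq_mul]
  rw [ENNReal.mul_inv_cancel_left hball.1 hball.2, ENNReal.mul_inv_cancel_left hball.1 hball.2]
  obtain ⟨D, hDmeas, hcover, hdisj, hboundary, hDvol⟩ := hunimod
  have : DiscreteTopology Λ.toIntSubmodule := hdisc
  have : IsZLattice ℝ Λ.toIntSubmodule := ⟨hspan⟩
  obtain ⟨n, κ, _, bV, b, hbΛ, hbV, hb_inl⟩ :=
    ZLattice.exists_adapted_basis Λ.toIntSubmodule V hfull
  have hΛ : (span ℤ (Set.range b)).toAddSubgroup = Λ := by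
    rw [hbΛ]; exact AddSubgroup.toIntSubmodule_toAddSubgroup Λ
  have hκ : Fintype.card κ = finrank ℝ Vᗮ := by
    have := V.finrank_add_finrank_orthogonal
    rw [finrank_eq_card_basis b, finrank_eq_card_basis bV, Fintype.card_sum,
      Fintype.card_fin] at this
    omega
  classical
  let e₁ := (stdOrthonormalBasis ℝ V).reindex
    (Fintype.equivFinOfCardEq (finrank_eq_card_basis bV).symm).symm
  let e₂ := (stdOrthonormalBasis ℝ Vᗮ).reindex (Fintype.equivFinOfCardEq hκ).symm
  have hdet : |(e₁.sumOrthogonal V e₂).toBasis.det b| = 1 := by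
    have h := (hΛ ▸ isAddFundamentalDomain_of_tiling Λ hDmeas hcover hdisj
      hboundary).volume_eq_abs_det (e₁.sumOrthogonal V e₂)
    rwa [hDvol, eq_comm, ENNReal.ofReal_eq_one] at h
  obtain ⟨p, hp, hdet_eq⟩ := e₁.exists_basis_abs_det_innerDualBasis_eq V e₂ b bV hb_inl hdet
  have hdual := comap_orthogonal_dualLattice_eq V b (fun i ↦ hb_inl i ▸ (bV i).2) p hp
  rw [hΛ] at hdual
  rw [IsAddFundamentalDomain.volume_eq_abs_det (b := bV) (hbV ▸ hD₁) e₁,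
    IsAddFundamentalDomain.volume_eq_abs_det (b := p.innerDualBasis) (hdual ▸ hD₂) e₂, hdet_eq]

/-- Lemma 5.2 (covolumes of dual sublattices), with the covolume of a lattice `Γ` in a
subspace `W` normalized so that the unit ball of `W` has measure one: if `Λ` is unimodular
and `Λ ∩ V` is a full-rank lattice in `V`, then
`ω_k · Covol(Λ ∩ V) = ω_{d-k} · Covol(Λ* ∩ V^⊥)`, where `ω_j` is the volume of the
Euclidean unit ball of the respective subspace. -/
theorem stmt_8 (d : ℕ) (hd : 1 ≤ d)
    (Λ : AddSubgroup (EuclideanSpace ℝ (Fin d)))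
    (hdisc : DiscreteTopology Λ)
    (hspan : Submodule.span ℝ (Λ : Set (EuclideanSpace ℝ (Fin d))) = ⊤)
    (hunimod : ∃ D : Set (EuclideanSpace ℝ (Fin d)), MeasurableSet D ∧
      (∀ x, ∃ r ∈ Λ, x - r ∈ D) ∧
      (∀ r ∈ Λ, r ≠ 0 → interior D ∩ ((r + ·) '' interior D) = ∅) ∧
      volume (D \ interior D) = 0 ∧ volume D = 1)
    (V : Submodule ℝ (EuclideanSpace ℝ (Fin d)))
    (hfull : Submodule.span ℝ
      ((AddSubgroup.comap (V.subtype.toAddMonoidHom) Λ : AddSubgroup ↥V) : Set ↥V) = ⊤)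
    (D₁ : Set ↥V) (D₂ : Set ↥(Vᗮ))
    (hD₁ : IsAddFundamentalDomain (AddSubgroup.comap (V.subtype.toAddMonoidHom) Λ) D₁
      (volume : Measure ↥V))
    (hD₂ : IsAddFundamentalDomain
      (AddSubgroup.comap ((Vᗮ).subtype.toAddMonoidHom) (dualLattice Λ)) D₂
      (volume : Measure ↥(Vᗮ))) :
    volume (Metric.ball (0 : ↥V) 1) *
        (((volume (Metric.ball (0 : ↥V) 1))⁻¹ • (volume : Measure ↥V)) D₁) =
      volume (Metric.ball (0 : ↥(Vᗮ)) 1) *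
        (((volume (Metric.ball (0 : ↥(Vᗮ)) 1))⁻¹ • (volume : Measure ↥(Vᗮ))) D₂) :=
  stmt_8_general d Λ hdisc hspan hunimod V hfull D₁ D₂ hD₁ hD₂
end

section
/- Fix α, β > 0 and a function ψ : (0,∞) → (0,∞) such that q ↦ q^n ψ^m(q) is nonincreasing and ∫₁^∞ q^{n−1} ψ^m(q) dq = ∞. Then there exists a sequence of integers (N_k)_{k≥1}, each a power of 2 and each at least 2, such that for all k ≥ 1: β ≤ F_ψ(Q^k, Q^{k+1}) ≤ β + M_ψ·α·log 2, where N^k = N₁⋯N_k, Q^k = (N^k)^α, M_ψ = ψ^m(1), and F_ψ(Q₁,Q₂) = ∫_{Q₁}^{Q₂} q^{n−1} ψ^m(q) dq. -/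
/-! With `f q = q^(n-1) ψ(q)^m` the function `q f(q) = φ(q)` is nonincreasing, so `f q ≤ φ(1) / q`
for `q ≥ 1`: the integral of `f` over `[x, 2^α x]` with `x ≥ 1` is at most `ψ(1)^m α log 2`.
Starting from `Q = P^α`, multiply `P` by `2` until the integral from `Q` first reaches `β`
(it does, by divergence); the overshoot is at most one such step. Iterating from `P = 1`
produces the `N_k`. -/

open MeasureTheory Set Filter Finset

theorem exists_pos_crossing_of_step_le {u : ℕ → ℝ} {β δ : ℝ} (h0 : u 0 < β)
    (hstep : ∀ j, u (j + 1) ≤ u j + δ) (hu : ∃ j, β ≤ u j) :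
    ∃ j, 1 ≤ j ∧ u j ∈ Icc β (β + δ) := by
  classical
  set j := Nat.find hu
  have hj : 1 ≤ j := Nat.one_le_iff_ne_zero.2 fun h => h0.not_ge (h ▸ Nat.find_spec hu)
  refine ⟨j, hj, Nat.find_spec hu, ?_⟩
  have hprev : u (j - 1) < β := not_le.1 (Nat.find_min hu (Nat.sub_lt hj one_pos))
  calc u j = u (j - 1 + 1) := by rw [Nat.sub_add_cancel hj]
    _ ≤ β + δ := by linarith [hstep (j - 1)]

section

variable {f : ℝ → ℝ}

theorem antitoneOn_Ioi_of_antitoneOn_mul (hf0 : ∀ q, 0 < q → 0 ≤ f q)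
    (hφ : AntitoneOn (fun q => q * f q) (Ioi 0)) : AntitoneOn f (Ioi 0) := by
  intro a ha b hb hab
  have ha' : 0 < a := ha
  have hb' : 0 < b := hb
  calc f b = b * f b / b := by field_simp
    _ ≤ a * f a / b := div_le_div_of_nonneg_right (hφ ha hb hab) hb'.le
    _ ≤ a * f a / a := div_le_div_of_nonneg_left (mul_nonneg ha'.le (hf0 a ha')) ha' hab
    _ = f a := by field_simp

theorem AntitoneOn.intervalIntegrable_of_pos (hf : AntitoneOn f (Ioi 0)) {a b : ℝ}
    (ha : 0 < a) (hb : 0 < b) : IntervalIntegrable f volume a b :=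
  (hf.mono fun _ hx => lt_of_lt_of_le (lt_min ha hb) hx.1).intervalIntegrable

theorem integral_le_mul_log_div {a b : ℝ} (hφ : AntitoneOn (fun q => q * f q) (Ioi 0))
    (hfi : IntervalIntegrable f volume a b) (ha : 0 < a) (hab : a ≤ b) :
    ∫ q in a..b, f q ≤ a * f a * Real.log (b / a) := by
  have hb : 0 < b := ha.trans_le hab
  have hinv : IntervalIntegrable (fun q : ℝ => a * f a * q⁻¹) volume a b :=
    (intervalIntegral.intervalIntegrable_inv
      (fun x hx => (lt_min ha hb |>.trans_le hx.1).ne') continuousOn_id).const_mul _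
  calc ∫ q in a..b, f q ≤ ∫ q in a..b, a * f a * q⁻¹ := by
        refine intervalIntegral.integral_mono_on hab hfi hinv fun q hq => ?_
        have hq0 : 0 < q := ha.trans_le hq.1
        rw [← div_eq_mul_inv, le_div_iff₀ hq0, mul_comm]
        exact hφ ha hq0 hq.1
    _ = a * f a * Real.log (b / a) := by
        rw [intervalIntegral.integral_const_mul, integral_inv_of_pos ha hb]

theorem tendsto_intervalIntegral_atTop_of_lintegral_eq_top {a : ℝ}
    (hf0 : ∀ q, a ≤ q → 0 ≤ f q) (hfi : ∀ b, a ≤ b → IntervalIntegrable f volume a b)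
    (hdiv : ∫⁻ q in Ioi a, ENNReal.ofReal (f q) = ⊤) :
    Tendsto (fun b => ∫ q in a..b, f q) atTop atTop := by
  have hunbdd : ∀ C, ∃ b, a ≤ b ∧ C ≤ ∫ q in a..b, f q := by
    by_contra! hbdd
    obtain ⟨C, hC⟩ := hbdd
    have hint : IntegrableOn f (Ioi a) := by
      have hfi' (b : ℝ) : IntegrableOn f (Ioc a b) := by
        rcases le_or_gt a b with hab | hba
        · exact (hfi b hab).1
        · simp [Ioc_eq_empty_of_le hba.le]
      refine integrableOn_Ioi_of_intervalIntegral_norm_bounded C a hfi' tendsto_id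
        ((eventually_ge_atTop a).mono fun b hab => ?_)
      have hnorm : ∫ q in a..b, ‖f q‖ = ∫ q in a..b, f q :=
        intervalIntegral.integral_congr fun q hq =>
          Real.norm_of_nonneg (hf0 q (by rw [uIcc_of_le hab] at hq; exact hq.1))
      exact hnorm ▸ (hC b hab).le
    exact hint.lintegral_lt_top.ne hdiv
  refine tendsto_atTop_atTop.2 fun C => ?_
  obtain ⟨b₀, hab₀, hC⟩ := hunbdd C
  refine ⟨b₀, fun b hb => hC.trans ?_⟩
  rw [← intervalIntegral.integral_add_adjacent_intervals (hfi b₀ hab₀)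
    ((hfi b₀ hab₀).symm.trans (hfi b (hab₀.trans hb)))]
  exact le_add_of_nonneg_right
    (intervalIntegral.integral_nonneg hb fun q hq => hf0 q (hab₀.trans hq.1))

theorem integral_mul_le_mul_log (hf0 : ∀ q, 0 < q → 0 ≤ f q)
    (hφ : AntitoneOn (fun q => q * f q) (Ioi 0)) {x c : ℝ} (hx : 1 ≤ x) (hc : 1 ≤ c) :
    ∫ q in x..x * c, f q ≤ f 1 * Real.log c := by
  have hx0 : 0 < x := one_pos.trans_le hx
  have hxc : x ≤ x * c := le_mul_of_one_le_right hx0.le hc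
  have hfi : IntervalIntegrable f volume x (x * c) :=
    (antitoneOn_Ioi_of_antitoneOn_mul hf0 hφ).intervalIntegrable_of_pos hx0 (hx0.trans_le hxc)
  calc ∫ q in x..x * c, f q ≤ x * f x * Real.log (x * c / x) :=
        integral_le_mul_log_div hφ hfi hx0 hxc
    _ ≤ 1 * f 1 * Real.log c := by
        rw [mul_div_cancel_left₀ _ hx0.ne']
        exact mul_le_mul_of_nonneg_right (hφ (mem_Ioi.2 one_pos) (mem_Ioi.2 hx0) hx)
          (Real.log_nonneg hc)
    _ = f 1 * Real.log c := by rw [one_mul]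

theorem exists_integral_rpow_mul_two_pow_mem (hf0 : ∀ q, 0 < q → 0 ≤ f q)
    (hφ : AntitoneOn (fun q => q * f q) (Ioi 0))
    (hdiv : Tendsto (fun b => ∫ q in (1 : ℝ)..b, f q) atTop atTop)
    {α β P : ℝ} (hα : 0 < α) (hβ : 0 < β) (hP : 1 ≤ P) :
    ∃ j : ℕ, 1 ≤ j ∧
      ∫ q in P ^ α..(P * 2 ^ j) ^ α, f q ∈ Icc β (β + f 1 * α * Real.log 2) := by
  have hfi {a b : ℝ} : 0 < a → 0 < b → IntervalIntegrable f volume a b :=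
    (antitoneOn_Ioi_of_antitoneOn_mul hf0 hφ).intervalIntegrable_of_pos
  set b : ℕ → ℝ := fun j => (P * 2 ^ j) ^ α
  have hb1 : ∀ j, 1 ≤ b j := fun j =>
    Real.one_le_rpow (one_le_mul_of_one_le_of_one_le hP (one_le_pow₀ one_le_two)) hα.le
  have hb0 : ∀ j, 0 < b j := fun j => one_pos.trans_le (hb1 j)
  have hb_succ : ∀ j, b (j + 1) = b j * 2 ^ α := fun j => by
    simp only [b, pow_succ, ← mul_assoc]
    exact Real.mul_rpow (by positivity) zero_le_two
  have hstep : ∀ j, ∫ q in b j..b (j + 1), f q ≤ f 1 * α * Real.log 2 := fun j => by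
    rw [hb_succ, mul_assoc, ← Real.log_rpow two_pos]
    exact integral_mul_le_mul_log hf0 hφ (hb1 j) (Real.one_le_rpow one_le_two hα.le)
  have hb_top : Tendsto b atTop atTop :=
    (tendsto_rpow_atTop hα).comp
      ((tendsto_pow_atTop_atTop_of_one_lt one_lt_two).const_mul_atTop (one_pos.trans_le hP))
  have hcross : ∃ j, β ≤ ∫ q in b 0..b j, f q := by
    obtain ⟨j, hj⟩ :=
      ((hdiv.comp hb_top).eventually_ge_atTop (β + ∫ q in (1 : ℝ)..b 0, f q)).exists
    refine ⟨j, ?_⟩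
    rw [← intervalIntegral.integral_interval_sub_left (hfi one_pos (hb0 j))
      (hfi one_pos (hb0 0))]
    exact le_sub_iff_add_le.2 hj
  have hb_zero : b 0 = P ^ α := by simp [b]
  have hu_succ (j : ℕ) :
      ∫ q in b 0..b (j + 1), f q ≤ (∫ q in b 0..b j, f q) + f 1 * α * Real.log 2 := by
    rw [← intervalIntegral.integral_add_adjacent_intervals (hfi (hb0 0) (hb0 j))
      (hfi (hb0 j) (hb0 (j + 1)))]
    exact (add_le_add_iff_left _).2 (hstep j)
  obtain ⟨j, hj, hmem⟩ := exists_pos_crossing_of_step_le (u := fun j => ∫ q in b 0..b j, f q)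
    (by simpa using hβ) hu_succ hcross
  exact ⟨j, hj, hb_zero ▸ hmem⟩

end

theorem exists_seq_prod_pow_of_forall_exists {d : ℕ} (hd : 0 < d) {R : ℕ → ℕ → Prop}
    (h : ∀ P, 1 ≤ P → ∃ j, 1 ≤ j ∧ R P j) :
    ∃ J : ℕ → ℕ, ∀ k, 1 ≤ J k ∧ R (∏ i ∈ range k, d ^ J i) (J k) := by
  have h' : ∀ P, ∃ j, 1 ≤ j ∧ (1 ≤ P → R P j) := fun P => by
    by_cases hP : 1 ≤ P
    · obtain ⟨j, hj, hR⟩ := h P hP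
      exact ⟨j, hj, fun _ => hR⟩
    · exact ⟨1, le_rfl, fun h => absurd h hP⟩
  choose jf hjf using h'
  let P : ℕ → ℕ := fun k => Nat.rec 1 (fun _ p => p * d ^ jf p) k
  have hP : ∀ k, P k = ∏ i ∈ range k, d ^ jf (P i) := fun k => by
    induction k with
    | zero => rfl
    | succ k ih => rw [prod_range_succ, ← ih]
  refine ⟨fun k => jf (P k), fun k => ⟨(hjf _).1, ?_⟩⟩
  rw [← hP]
  exact (hjf _).2 (hP k ▸ Nat.one_le_iff_ne_zero.2 (prod_pos fun i _ => pow_pos hd _).ne')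

theorem stmt_9_general (m n : ℕ) (hn : 1 ≤ n)
    (α β : ℝ) (hα : 0 < α) (hβ : 0 < β)
    (ψ : ℝ → ℝ) (hψpos : ∀ q, 0 < q → 0 < ψ q)
    (hφ : AntitoneOn (fun q => q ^ n * ψ q ^ m) (Set.Ioi 0))
    (hdiv : ∫⁻ q in Set.Ioi (1 : ℝ), ENNReal.ofReal (q ^ (n - 1) * ψ q ^ m) = ⊤) :
    ∃ Nseq : ℕ → ℕ, (∀ k, ∃ j : ℕ, 1 ≤ j ∧ Nseq k = 2 ^ j) ∧
      ∀ k : ℕ,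
        β ≤ (∫ q in ((∏ i ∈ Finset.range k, (Nseq i : ℝ)) ^ α)..
              ((∏ i ∈ Finset.range (k + 1), (Nseq i : ℝ)) ^ α), q ^ (n - 1) * ψ q ^ m) ∧
        (∫ q in ((∏ i ∈ Finset.range k, (Nseq i : ℝ)) ^ α)..
              ((∏ i ∈ Finset.range (k + 1), (Nseq i : ℝ)) ^ α), q ^ (n - 1) * ψ q ^ m) ≤
          β + ψ 1 ^ m * α * Real.log 2 := by
  set f : ℝ → ℝ := fun q => q ^ (n - 1) * ψ q ^ m
  have hf0 : ∀ q, 0 < q → 0 ≤ f q := fun q hq => by have := hψpos q hq; positivity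
  have hqf : (fun q => q ^ n * ψ q ^ m) = fun q => q * f q := by
    funext q
    rw [← mul_assoc, ← pow_succ', Nat.sub_add_cancel hn]
  have hφf : AntitoneOn (fun q => q * f q) (Ioi 0) := hqf ▸ hφ
  have hfi {a b : ℝ} : 0 < a → 0 < b → IntervalIntegrable f volume a b :=
    (antitoneOn_Ioi_of_antitoneOn_mul hf0 hφf).intervalIntegrable_of_pos
  have htop := tendsto_intervalIntegral_atTop_of_lintegral_eq_top
    (fun q hq => hf0 q (one_pos.trans_le hq)) (fun b hb => hfi one_pos (one_pos.trans_le hb)) hdiv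
  obtain ⟨J, hJ⟩ := exists_seq_prod_pow_of_forall_exists two_pos
    (R := fun P j => ∫ q in (P : ℝ) ^ α..((P : ℝ) * 2 ^ j) ^ α, f q ∈
      Icc β (β + f 1 * α * Real.log 2))
    fun P hP => exists_integral_rpow_mul_two_pow_mem hf0 hφf htop hα hβ
      (by exact_mod_cast hP)
  refine ⟨fun k => 2 ^ J k, fun k => ⟨J k, (hJ k).1, rfl⟩, fun k => ?_⟩
  have hf1 : f 1 = ψ 1 ^ m := by simp [f]
  simpa [prod_range_succ, hf1] using (hJ k).2

/-- Choice of the sequence `(N_k)`: given `α, β > 0` and a nice approximation function `ψ`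
(i.e. `q ↦ qⁿ ψ(q)^m` nonincreasing and `∫₁^∞ q^{n-1} ψ(q)^m dq = ∞`), there is a sequence
of powers of two `N_k ≥ 2` such that, with `N^k = N₁⋯N_k` and `Q^k = (N^k)^α`,
`β ≤ F_ψ(Q^k, Q^{k+1}) ≤ β + ψ(1)^m · α · log 2` for all `k`. -/
theorem stmt_9 (m n : ℕ) (hm : 1 ≤ m) (hn : 1 ≤ n)
    (α β : ℝ) (hα : 0 < α) (hβ : 0 < β)
    (ψ : ℝ → ℝ) (hψpos : ∀ q, 0 < q → 0 < ψ q)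
    (hφ : AntitoneOn (fun q => q ^ n * ψ q ^ m) (Set.Ioi 0))
    (hdiv : ∫⁻ q in Set.Ioi (1 : ℝ), ENNReal.ofReal (q ^ (n - 1) * ψ q ^ m) = ⊤) :
    ∃ Nseq : ℕ → ℕ, (∀ k, ∃ j : ℕ, 1 ≤ j ∧ Nseq k = 2 ^ j) ∧
      ∀ k : ℕ,
        β ≤ (∫ q in ((∏ i ∈ Finset.range k, (Nseq i : ℝ)) ^ α)..
              ((∏ i ∈ Finset.range (k + 1), (Nseq i : ℝ)) ^ α), q ^ (n - 1) * ψ q ^ m) ∧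
        (∫ q in ((∏ i ∈ Finset.range k, (Nseq i : ℝ)) ^ α)..
              ((∏ i ∈ Finset.range (k + 1), (Nseq i : ℝ)) ^ α), q ^ (n - 1) * ψ q ^ m) ≤
          β + ψ 1 ^ m * α * Real.log 2 :=
  stmt_9_general m n hn α β hα hβ ψ hψpos hφ hdiv
end

section
/- For every q ∈ ℝⁿ \ {0} and every measurable set S ⊂ ℝ^m, the Lebesgue measure (normalized to be a probability measure on the unit cube K = [0,1]^{mn} of m×n matrices) of {A ∈ K : Aq ∈ S} equals ∫_S η(p,q) dp, where η(p,q) is the density at p of the pushforward of Lebesgue measure on [0,1]^{mn} under A ↦ Aq; moreover η satisfies the scaling relation η(γr) = γ^{−m} η(r) for all γ > 0 and r = (p,q) with q ≠ 0. -/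
/-!
The map `A ↦ A q` is a surjective linear map for `q ≠ 0`, so it pushes Lebesgue measure on
matrices to a multiple of Lebesgue measure on `ℝ^m`; hence the image of the (finite) uniform measure
on the cube is absolutely continuous and has a Radon–Nikodym density. As `A (c u) = c (A u)`, the
pushforward along `q = ‖q‖ u` is the dilation by `‖q‖` of the pushforward along the unit vector
`u`, whose density is `‖q‖^{-m} η(p / ‖q‖, u)`. Taking this formula as the definition of `η(p, q)`
makes it homogeneous of degree `-m` in `(p, q)`.
-/

open MeasureTheory Measure Module

section LinearImage

variable {E F : Type*} [NormedAddCommGroup E] [NormedSpace ℝ E] [MeasurableSpace E] [BorelSpace E]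
  [FiniteDimensional ℝ E] [NormedAddCommGroup F] [NormedSpace ℝ F] [MeasurableSpace F]
  [BorelSpace F]

theorem LinearMap.map_absolutelyContinuous_addHaar_of_surjective (μ : Measure E)
    [μ.IsAddHaarMeasure] (ν : Measure F) [ν.IsAddHaarMeasure] {L : E →ₗ[ℝ] F}
    (hL : Function.Surjective L) {ρ : Measure E} (hρ : ρ ≪ μ) : ρ.map L ≪ ν := by
  obtain ⟨c, -, hc⟩ := L.exists_map_addHaar_eq_smul_addHaar μ ν hL
  have hmap := hρ.map L.continuous_of_finiteDimensional.measurable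
  rw [hc] at hmap
  exact hmap.trans smul_absolutelyContinuous

theorem map_smul_eq_withDensity_rnDeriv (μ : Measure E) [μ.IsAddHaarMeasure] {ρ : Measure E}
    [SigmaFinite ρ] (hρ : ρ ≪ μ) {c : ℝ} (hc : c ≠ 0) :
    ρ.map (c • ·) = μ.withDensity fun x =>
      ENNReal.ofReal (|c| ^ (-(finrank ℝ E : ℤ))) * ρ.rnDeriv μ (c⁻¹ • x) := by
  have hf := ρ.measurable_rnDeriv μ
  ext S hS
  have hT : MeasurableSet ((c • ·) ⁻¹' S) := measurable_const_smul c hS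
  have hchange : ∫⁻ x in S, ρ.rnDeriv μ (c⁻¹ • x) ∂μ
      = ENNReal.ofReal (|c| ^ finrank ℝ E) * ρ ((c • ·) ⁻¹' S) := by
    have hpre : (c⁻¹ • · : E → E) ⁻¹' ((c • ·) ⁻¹' S) = S := by
      ext x; simp [smul_inv_smul₀ hc]
    rw [← setLIntegral_rnDeriv hρ, ← hpre, ← setLIntegral_map hT hf (measurable_const_smul _),
      map_addHaar_smul μ (inv_ne_zero hc), restrict_smul, lintegral_smul_measure, hpre]
    simp [inv_pow, smul_eq_mul]
  rw [map_apply (measurable_const_smul c) hS, withDensity_apply _ hS,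
    lintegral_const_mul' _ _ ENNReal.ofReal_ne_top, hchange, ← mul_assoc,
    ← ENNReal.ofReal_mul (by positivity), zpow_neg, zpow_natCast,
    inv_mul_cancel₀ (by positivity), ENNReal.ofReal_one, one_mul]

end LinearImage

section Homogenize

variable {E F : Type*} [NormedAddCommGroup F] [NormedSpace ℝ F] [AddCommGroup E] [Module ℝ E]

noncomputable def homogenize (k : ℤ) (g : F → E → ENNReal) (p : E) (q : F) : ENNReal :=
  ENNReal.ofReal (‖q‖ ^ k) * g (‖q‖⁻¹ • q) (‖q‖⁻¹ • p)

theorem homogenize_smul (k : ℤ) (g : F → E → ENNReal) {γ : ℝ} (hγ : 0 < γ) (p : E) (q : F) :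
    homogenize k g (γ • p) (γ • q) = ENNReal.ofReal (γ ^ k) * homogenize k g p q := by
  have hnorm : ‖γ • q‖ = γ * ‖q‖ := by rw [norm_smul, Real.norm_of_nonneg hγ.le]
  have hcancel : ‖γ • q‖⁻¹ * γ = ‖q‖⁻¹ := by
    rw [hnorm, mul_inv, mul_comm, ← mul_assoc, mul_inv_cancel₀ hγ.ne', one_mul]
  simp only [homogenize, smul_smul, hcancel]
  rw [hnorm, mul_zpow, ENNReal.ofReal_mul (zpow_nonneg hγ.le k), mul_assoc]

end Homogenize

section MulVec

open Matrix

variable {ι κ : Type*} [Fintype κ]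

def mulVecLeft (q : κ → ℝ) : (ι → κ → ℝ) →ₗ[ℝ] ι → ℝ where
  toFun A i := ∑ j, A i j * q j
  map_add' A B := by ext i; simp [add_mul, Finset.sum_add_distrib]
  map_smul' c A := by ext i; simp [Finset.mul_sum, mul_assoc]

theorem mulVecLeft_apply (q : κ → ℝ) (A : ι → κ → ℝ) :
    mulVecLeft q A = fun i => ∑ j, A i j * q j := rfl

theorem mulVecLeft_smul (c : ℝ) (q : κ → ℝ) (A : ι → κ → ℝ) :
    mulVecLeft (c • q) A = c • mulVecLeft q A := by
  ext i; simp [mulVecLeft_apply, Finset.mul_sum, mul_left_comm]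

theorem mulVecLeft_surjective {q : κ → ℝ} (hq : q ≠ 0) :
    Function.Surjective (mulVecLeft (ι := ι) q) := fun p =>
  ⟨vecMulVec p ((q ⬝ᵥ q)⁻¹ • q), by
    change vecMulVec p ((q ⬝ᵥ q)⁻¹ • q) *ᵥ q = p
    rw [vecMulVec_mulVec, smul_dotProduct, smul_eq_mul,
      inv_mul_cancel₀ (by simpa using hq)]
    simp⟩

end MulVec

section MulVecDensity

variable {ι κ : Type*} [Fintype ι] [Fintype κ]

/-- Read off at the unit direction `q / ‖q‖` and extended homogeneously, so that the scaling law
holds everywhere and not just almost everywhere. -/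
noncomputable def mulVecDensity (μ : Measure (ι → κ → ℝ)) : (ι → ℝ) → (κ → ℝ) → ENNReal :=
  homogenize (-(Fintype.card ι : ℤ)) fun u => (μ.map (mulVecLeft u)).rnDeriv volume

theorem measurable_mulVecDensity (μ : Measure (ι → κ → ℝ)) (q : κ → ℝ) :
    Measurable (mulVecDensity μ · q) :=
  ((measurable_rnDeriv _ _).comp (measurable_const_smul _)).const_mul _

theorem mulVecDensity_smul (μ : Measure (ι → κ → ℝ)) {γ : ℝ} (hγ : 0 < γ) (p : ι → ℝ)
    (q : κ → ℝ) : mulVecDensity μ (γ • p) (γ • q) =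
      ENNReal.ofReal (γ ^ (-(Fintype.card ι : ℤ))) * mulVecDensity μ p q :=
  homogenize_smul _ _ hγ p q

theorem map_mulVecLeft_eq_withDensity {μ : Measure (ι → κ → ℝ)} [IsFiniteMeasure μ]
    (hμ : μ ≪ volume) {q : κ → ℝ} (hq : q ≠ 0) :
    μ.map (mulVecLeft q) = volume.withDensity (mulVecDensity μ · q) := by
  have hnorm : ‖q‖ ≠ 0 := norm_ne_zero_iff.2 hq
  set u := ‖q‖⁻¹ • q
  have hq_eq : q = ‖q‖ • u := (smul_inv_smul₀ hnorm q).symm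
  have hfactor : ⇑(mulVecLeft (ι := ι) q) = (‖q‖ • ·) ∘ mulVecLeft u := by
    ext A : 1
    conv_lhs => rw [hq_eq, mulVecLeft_smul]
    rfl
  have hac : μ.map (mulVecLeft u) ≪ volume :=
    LinearMap.map_absolutelyContinuous_addHaar_of_surjective volume volume
      (mulVecLeft_surjective (smul_ne_zero (inv_ne_zero hnorm) hq)) hμ
  rw [hfactor,
    ← map_map (measurable_const_smul _) (mulVecLeft u).continuous_of_finiteDimensional.measurable,
    map_smul_eq_withDensity_rnDeriv volume hac hnorm, abs_norm, finrank_fintype_fun_eq_card]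
  rfl

end MulVecDensity

theorem stmt_11_general (m n : ℕ) :
    ∃ η : (Fin m → ℝ) → (Fin n → ℝ) → ENNReal,
      (∀ q : Fin n → ℝ, q ≠ 0 →
        (Measurable fun p => η p q) ∧
        ∀ S : Set (Fin m → ℝ), MeasurableSet S →
          (volume.restrict {A : Fin m → Fin n → ℝ | ∀ i j, A i j ∈ Set.Icc (0 : ℝ) 1})
              {A : Fin m → Fin n → ℝ | (fun i => ∑ j, A i j * q j) ∈ S} =
            ∫⁻ p in S, η p q) ∧
      ∀ (γ : ℝ), 0 < γ → ∀ (q : Fin n → ℝ), q ≠ 0 → ∀ p : Fin m → ℝ,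
        η (γ • p) (γ • q) = ENNReal.ofReal (γ ^ (-(m : ℤ))) * η p q := by
  set K := {A : Fin m → Fin n → ℝ | ∀ i j, A i j ∈ Set.Icc (0 : ℝ) 1}
  have hK : K = Set.Icc 0 1 := by ext A; simp [K, Pi.le_def, forall_and]
  have : IsFiniteMeasure (volume.restrict K) := by
    rw [hK]; exact isFiniteMeasure_restrict.2 measure_Icc_lt_top.ne
  refine ⟨mulVecDensity (volume.restrict K), fun q hq => ⟨measurable_mulVecDensity _ q,
    fun S hS => ?_⟩, fun γ hγ q _ p => ?_⟩
  · rw [← withDensity_apply _ hS, ← map_mulVecLeft_eq_withDensity absolutelyContinuous_restrict hq,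
      map_apply (mulVecLeft q).continuous_of_finiteDimensional.measurable hS]
    rfl
  · simpa only [Fintype.card_fin] using mulVecDensity_smul _ hγ p q

/-- The density `η`: for `q ≠ 0`, the normalized Lebesgue measure on the unit cube
`K = [0,1]^{mn}` of `m×n` matrices of the set `{A ∈ K : Aq ∈ S}` equals `∫_S η(p,q) dp`,
where `η(·,q)` is the density of the pushforward of `λ_K` under `A ↦ Aq`; moreover `η`
satisfies the scaling relation `η(γp, γq) = γ^{-m} η(p,q)` for `γ > 0`. -/
theorem stmt_11 (m n : ℕ) (hm : 1 ≤ m) (hn : 1 ≤ n) :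
    ∃ η : (Fin m → ℝ) → (Fin n → ℝ) → ENNReal,
      (∀ q : Fin n → ℝ, q ≠ 0 →
        (Measurable fun p => η p q) ∧
        ∀ S : Set (Fin m → ℝ), MeasurableSet S →
          (volume.restrict {A : Fin m → Fin n → ℝ | ∀ i j, A i j ∈ Set.Icc (0 : ℝ) 1})
              {A : Fin m → Fin n → ℝ | (fun i => ∑ j, A i j * q j) ∈ S} =
            ∫⁻ p in S, η p q) ∧
      ∀ (γ : ℝ), 0 < γ → ∀ (q : Fin n → ℝ), q ≠ 0 → ∀ p : Fin m → ℝ,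
        η (γ • p) (γ • q) = ENNReal.ofReal (γ ^ (-(m : ℤ))) * η p q :=
  stmt_11_general m n
end

section
/- For all p ∈ ℝ^m, q ∈ ℝⁿ \ {0}, and any nonincreasing ψ, the normalized Lebesgue measure on K = [0,1]^{mn} of the set Δ_ψ(p,q) = {A ∈ K : ‖Aq − p‖ ≤ ψ(‖q‖)} satisfies λ_K(Δ_ψ(p,q)) ≤ C·(ψ(‖q‖)/‖q‖)^m, where C depends only on m, n and the norms. -/
/-!
Each row `a` of `A` enters only through `a ⬝ᵥ q`. The shear replacing the coordinate `a j₀`,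
where `|q j₀| = ‖q‖∞`, by `a ⬝ᵥ q` has determinant `q j₀`, so it maps the part of the unit cube
where `|a ⬝ᵥ q - t| ≤ r` into a box of volume `2r`, and that part has volume at most `2r / ‖q‖∞`;
the rows are independent, which gives the `m`-th power. Equivalence of norms in finite dimension
converts `Nμ` and `Nν` to sup norms at the cost of the constant `C`.
-/

open MeasureTheory Set

namespace Seminorm

variable {E : Type*} [NormedAddCommGroup E] [NormedSpace ℝ E] [FiniteDimensional ℝ E]

theorem exists_le_mul_norm (p : Seminorm ℝ E) : ∃ C, 0 < C ∧ ∀ x, p x ≤ C * ‖x‖ :=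
  bound_of_continuous_normedSpace p p.convexOn.locallyLipschitz.continuous

theorem exists_norm_le_mul (p : Seminorm ℝ E) (hp : ∀ x, p x = 0 → x = 0) :
    ∃ c, 0 < c ∧ ∀ x, ‖x‖ ≤ c * p x := by
  rcases subsingleton_or_nontrivial E with hE | hE
  · exact ⟨1, one_pos, fun x => by simp [Subsingleton.elim x 0]⟩
  obtain ⟨x₀, hx₀, hmin⟩ := (isCompact_sphere (0 : E) 1).exists_isMinOn
    (NormedSpace.sphere_nonempty.2 zero_le_one) p.convexOn.locallyLipschitz.continuous.continuousOn
  have hx₀ : ‖x₀‖ = 1 := by simpa using hx₀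
  have hpx₀ : 0 < p x₀ := (apply_nonneg p x₀).lt_of_ne fun h =>
    by simp [hp x₀ h.symm] at hx₀
  refine ⟨(p x₀)⁻¹, inv_pos.2 hpx₀, fun x => ?_⟩
  rcases eq_or_ne x 0 with rfl | hx
  · simp
  have hxpos : 0 < ‖x‖ := norm_pos_iff.2 hx
  have : p x₀ ≤ ‖x‖⁻¹ * p x := by
    simpa [map_smul_eq_mul, hxpos.ne'] using
      isMinOn_iff.1 hmin (‖x‖⁻¹ • x) (by simp [norm_smul, hxpos.ne'])
  rw [inv_mul_eq_div, le_div_iff₀ hpx₀]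
  rw [inv_mul_eq_div, le_div_iff₀ hxpos] at this
  linarith

end Seminorm

theorem volume_setOf_abs_dotProduct_sub_le {ι : Type*} [Fintype ι] (q : ι → ℝ) {j₀ : ι}
    (hq : q j₀ ≠ 0) (t r : ℝ) :
    volume {a : ι → ℝ | (∀ j ≠ j₀, a j ∈ Icc 0 1) ∧ |a ⬝ᵥ q - t| ≤ r} =
      ENNReal.ofReal (2 * r / |q j₀|) := by
  classical
  set M : Matrix ι ι ℝ := (1 : Matrix ι ι ℝ).updateRow j₀ q
  have hdet : LinearMap.det (Matrix.toLin' M) = q j₀ := by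
    have hrows : ∑ k, q k • (1 : Matrix ι ι ℝ) k = q := by
      ext j; simp [Matrix.one_apply]
    simpa [LinearMap.det_toLin', hrows] using Matrix.det_updateRow_sum (1 : Matrix ι ι ℝ) j₀ q
  have hset : {a : ι → ℝ | (∀ j ≠ j₀, a j ∈ Icc 0 1) ∧ |a ⬝ᵥ q - t| ≤ r} =
      Matrix.toLin' M ⁻¹'
        Set.pi univ (Function.update (fun _ => Icc 0 1) j₀ (Icc (t - r) (t + r))) := by
    ext a
    simp only [mem_ofPred_eq, mem_preimage, Matrix.toLin'_apply, M, Matrix.updateRow_mulVec,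
      Matrix.one_mulVec, mem_pi, mem_univ, true_implies]
    rw [Function.forall_update_iff a fun i x => x ∈ Function.update _ j₀ _ i, abs_sub_comm,
      mem_Icc_iff_abs_le, dotProduct_comm, and_comm]
    simp +contextual [Function.update_of_ne]
  rw [hset, Measure.addHaar_preimage_linearMap _ (hdet ▸ hq), hdet, volume_pi_pi]
  simp only [Function.apply_update (fun _ => (volume : Measure ℝ)),
    Finset.prod_update_of_mem (Finset.mem_univ j₀), Real.volume_Icc, sub_zero,
    ENNReal.ofReal_one, Finset.prod_const_one, mul_one]
  rw [← ENNReal.ofReal_mul (abs_nonneg _), abs_inv]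
  ring_nf

theorem restrict_unitCube_setOf_norm_mulVec_sub_le {ι κ : Type*} [Fintype ι] [Fintype κ]
    (q : κ → ℝ) (hq : q ≠ 0) (p : ι → ℝ) (r : ℝ) :
    (volume.restrict {A : ι → κ → ℝ | ∀ i j, A i j ∈ Icc (0 : ℝ) 1})
        {A | ‖(fun i => ∑ j, A i j * q j) - p‖ ≤ r} ≤
      ENNReal.ofReal (2 * r / ‖q‖) ^ Fintype.card ι := by
  obtain ⟨j₀, hj₀⟩ : ∃ j₀, |q j₀| = ‖q‖ := by
    have : Nonempty κ := ⟨(Function.ne_iff.1 hq).choose⟩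
    obtain ⟨j₀, hj₀⟩ := Finite.exists_max fun j => |q j|
    exact ⟨j₀, le_antisymm (norm_le_pi_norm q j₀)
      ((pi_norm_le_iff_of_nonneg (abs_nonneg _)).2 hj₀)⟩
  have hqj₀ : q j₀ ≠ 0 := by
    rw [← abs_pos, hj₀]
    exact norm_pos_iff.2 hq
  have hK : MeasurableSet {A : ι → κ → ℝ | ∀ i j, A i j ∈ Icc (0 : ℝ) 1} := by
    measurability
  rw [Measure.restrict_apply' hK]
  calc _ ≤ volume (Set.pi univ fun i =>
          {a : κ → ℝ | (∀ j ≠ j₀, a j ∈ Icc 0 1) ∧ |a ⬝ᵥ q - p i| ≤ r}) := by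
        refine measure_mono fun A ⟨hA, hAK⟩ i _ => ⟨fun j _ => hAK i j, ?_⟩
        exact (norm_le_pi_norm _ i).trans hA
    _ = _ := by
        simp only [volume_pi_pi, volume_setOf_abs_dotProduct_sub_le q hqj₀, hj₀,
          Finset.prod_const, Finset.card_univ]

theorem stmt_12_general (m n : ℕ)
    (Nμ : (Fin m → ℝ) → ℝ)
    (hNμdef : ∀ x, Nμ x = 0 → x = 0)
    (hNμsmul : ∀ (a : ℝ) x, Nμ (a • x) = |a| * Nμ x)
    (hNμtri : ∀ x y, Nμ (x + y) ≤ Nμ x + Nμ y)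
    (Nν : (Fin n → ℝ) → ℝ)
    (hNνdef : ∀ x, Nν x = 0 → x = 0)
    (hNνsmul : ∀ (a : ℝ) x, Nν (a • x) = |a| * Nν x)
    (hNνtri : ∀ x y, Nν (x + y) ≤ Nν x + Nν y) :
    ∃ C : ℝ, 0 < C ∧
      ∀ ψ : ℝ → ℝ, Antitone ψ → (∀ t, 0 < ψ t) →
      ∀ (p : Fin m → ℝ) (q : Fin n → ℝ), q ≠ 0 →
        (volume.restrict {A : Fin m → Fin n → ℝ | ∀ i j, A i j ∈ Set.Icc (0 : ℝ) 1})
            {A : Fin m → Fin n → ℝ | Nμ ((fun i => ∑ j, A i j * q j) - p) ≤ ψ (Nν q)} ≤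
          ENNReal.ofReal (C * (ψ (Nν q) / Nν q) ^ m) := by
  let pμ : Seminorm ℝ (Fin m → ℝ) := .of Nμ hNμtri fun a x => by rw [hNμsmul, Real.norm_eq_abs]
  let pν : Seminorm ℝ (Fin n → ℝ) := .of Nν hNνtri fun a x => by rw [hNνsmul, Real.norm_eq_abs]
  obtain ⟨c, hc, hNμ⟩ := pμ.exists_norm_le_mul hNμdef
  obtain ⟨C, hC, hNν⟩ := pν.exists_le_mul_norm
  refine ⟨(2 * c * C) ^ m, by positivity, fun ψ _ hψ p q hq => ?_⟩
  set δ := ψ (Nν q)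
  have hδ : 0 < δ := hψ _
  have hq_norm : 0 < ‖q‖ := norm_pos_iff.2 hq
  have hNνq : 0 < Nν q := (apply_nonneg pν q).lt_of_ne fun h => hq (hNνdef q h.symm)
  have hratio : 2 * (c * δ) / ‖q‖ ≤ 2 * c * C * (δ / Nν q) := by
    have : 1 / ‖q‖ ≤ C / Nν q := by
      rw [div_le_div_iff₀ hq_norm hNνq, one_mul]
      exact hNν q
    calc 2 * (c * δ) / ‖q‖ = 2 * c * δ * (1 / ‖q‖) := by ring
      _ ≤ 2 * c * δ * (C / Nν q) := by gcongr
      _ = 2 * c * C * (δ / Nν q) := by ring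
  calc _ ≤ (volume.restrict {A : Fin m → Fin n → ℝ | ∀ i j, A i j ∈ Set.Icc (0 : ℝ) 1})
          {A | ‖(fun i => ∑ j, A i j * q j) - p‖ ≤ c * δ} :=
        measure_mono fun A hA => (hNμ _).trans (mul_le_mul_of_nonneg_left hA hc.le)
    _ ≤ ENNReal.ofReal (2 * (c * δ) / ‖q‖) ^ m := by
        simpa using restrict_unitCube_setOf_norm_mulVec_sub_le q hq p (c * δ)
    _ ≤ ENNReal.ofReal ((2 * c * C) ^ m * (δ / Nν q) ^ m) := by
        rw [← ENNReal.ofReal_pow (by positivity), ← mul_pow]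
        gcongr

/-- Crude measure bound (5.13): given norms `Nμ`, `Nν` on `ℝ^m`, `ℝⁿ`, there is `C > 0`
(depending only on `m`, `n` and the norms) such that for every positive nonincreasing `ψ`
and all `p`, `q ≠ 0`, the normalized Lebesgue measure on `K = [0,1]^{mn}` of
`Δ_ψ(p,q) = {A ∈ K : Nμ(Aq − p) ≤ ψ(Nν q)}` is at most `C·(ψ(Nν q)/Nν q)^m`. -/
theorem stmt_12 (m n : ℕ) (hm : 1 ≤ m) (hn : 1 ≤ n)
    (Nμ : (Fin m → ℝ) → ℝ)
    (hNμdef : ∀ x, Nμ x = 0 → x = 0)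
    (hNμsmul : ∀ (a : ℝ) x, Nμ (a • x) = |a| * Nμ x)
    (hNμtri : ∀ x y, Nμ (x + y) ≤ Nμ x + Nμ y)
    (Nν : (Fin n → ℝ) → ℝ)
    (hNνdef : ∀ x, Nν x = 0 → x = 0)
    (hNνsmul : ∀ (a : ℝ) x, Nν (a • x) = |a| * Nν x)
    (hNνtri : ∀ x y, Nν (x + y) ≤ Nν x + Nν y) :
    ∃ C : ℝ, 0 < C ∧
      ∀ ψ : ℝ → ℝ, Antitone ψ → (∀ t, 0 < ψ t) →
      ∀ (p : Fin m → ℝ) (q : Fin n → ℝ), q ≠ 0 →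
        (volume.restrict {A : Fin m → Fin n → ℝ | ∀ i j, A i j ∈ Set.Icc (0 : ℝ) 1})
            {A : Fin m → Fin n → ℝ | Nμ ((fun i => ∑ j, A i j * q j) - p) ≤ ψ (Nν q)} ≤
          ENNReal.ofReal (C * (ψ (Nν q) / Nν q) ^ m) :=
  stmt_12_general m n Nμ hNμdef hNμsmul hNμtri Nν hNνdef hNνsmul hNνtri
end

section
/- With the same Cantor-series setup: for any tree T* in E*, and any dimension function f, H^f(π(T^∞)) ≤ liminf_{ρ→0} N_ρ(π(T^∞))·f(ρ) ≤ C·liminf_{ρ→0} f(ρ)/f_−(ρ), where f_−(ρ) = (Π_{j=1}^{k(ρ)} 1/(1−P_j^−))·ρ^D, P_k^− = min_{ω ∈ T^{k−1}} #(E_k \ T_ω)/(N_k)^D is the lower evaporation rate, and C depends only on D and the norm. -/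
/-!
The lower bound `H^f ≤ liminf N_ρ · f(ρ)` holds for every set: a cover by `N_ρ(S)` balls of
radius `ρ`, padded with balls so small that their total `f`-cost is negligible, is admissible for
the `f`-content at every scale `ε ≥ ρ`.

For the upper bound fix `ρ ≤ 1` and `k = k(ρ)`, so that `ρ ≤ 1/N^k`. The set `π(T^∞)` lies in the
cubes of side `1/N^k` attached to the nodes of length `k`, and there are at most
`∏_{j<k} N_j^D (1 - P_j^-)` of those, since a node of length `j` keeps at most the proportion
`1 - P_j^-` of its `N_j^D` children. In the sup metric each cube is covered by
`⌈1/(2 N^k ρ)⌉^D ≤ (N^k ρ)^{-D}` balls of radius `ρ`, hence `N_ρ(π(T^∞)) ≤ 1/f_-(ρ)`, and the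
second inequality holds with `C = 1`.
-/

open MeasureTheory Filter

/-- Hausdorff `f`-measure, defined via countable covers by closed balls of positive
radius at most `ε`, with cost `∑ f(ρ_i)`, letting `ε → 0`. -/
noncomputable def hausdorffF {X : Type*} [MetricSpace X] (f : ℝ → ℝ) (S : Set X) : ENNReal :=
  ⨆ (ε : ℝ) (_ : 0 < ε),
    ⨅ (c : ℕ → X × ℝ)
      (_ : (∀ i, 0 < (c i).2 ∧ (c i).2 ≤ ε) ∧ S ⊆ ⋃ i, Metric.closedBall (c i).1 (c i).2),
      ∑' i, ENNReal.ofReal (f (c i).2)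

/-- `N_ρ(S)`: the minimal number of closed balls of radius `ρ` needed to cover `S`. -/
noncomputable def coverCount {X : Type*} [MetricSpace X] (ρ : ℝ) (S : Set X) : ENNReal :=
  ⨅ (F : Finset X) (_ : S ⊆ ⋃ x ∈ F, Metric.closedBall x ρ), (F.card : ENNReal)

/-- A string of digits is valid if its `j`-th digit has entries `< N j`. -/
def validStr (D : ℕ) (N : ℕ → ℕ) (ω : List (Fin D → ℕ)) : Prop :=
  ∀ (j : ℕ) (h : j < ω.length) (i : Fin D), ω.get ⟨j, h⟩ i < N j

/-- A tree in `E^*`: a set of valid strings closed under taking initial segments. -/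
def IsTree (D : ℕ) (N : ℕ → ℕ) (T : Set (List (Fin D → ℕ))) : Prop :=
  (∀ ω ∈ T, validStr D N ω) ∧ ∀ ω ∈ T, ω.dropLast ∈ T

/-- `N^k = N₁ ⋯ N_k`. -/
def Npow (N : ℕ → ℕ) (k : ℕ) : ℕ := ∏ i ∈ Finset.range k, N i

/-- The lower evaporation rate `P_k^-`: the minimal proportion of children removed from
the tree at a node of length `k`. -/
noncomputable def Pminus (D : ℕ) (N : ℕ → ℕ) (T : Set (List (Fin D → ℕ))) (k : ℕ) : ℝ :=
  sInf {x : ℝ | ∃ ω ∈ T, ω.length = k ∧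
    x = (({a : Fin D → ℕ | (∀ i, a i < N k) ∧ ω ++ [a] ∉ T}.ncard : ℝ)) / (N k : ℝ) ^ D}

/-- `k(ρ)`: the unique `k` with `1/N^{k+1} < ρ ≤ 1/N^k`. -/
noncomputable def kIdx (N : ℕ → ℕ) (ρ : ℝ) : ℕ := sSup {k : ℕ | ρ ≤ ((Npow N k : ℝ))⁻¹}

/-- `f_-(ρ) = (∏_{j=1}^{k(ρ)} (1 - P_j^-)⁻¹) ρ^D`. -/
noncomputable def fminus (D : ℕ) (N : ℕ → ℕ) (T : Set (List (Fin D → ℕ))) (ρ : ℝ) : ℝ :=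
  (∏ j ∈ Finset.range (kIdx N ρ), (1 - Pminus D N T j)⁻¹) * ρ ^ D

/-- The set of infinite branches through the tree. -/
def branches (D : ℕ) (T : Set (List (Fin D → ℕ))) : Set (ℕ → Fin D → ℕ) :=
  {σ | ∀ k : ℕ, (List.ofFn fun j : Fin k => σ j) ∈ T}

/-- The coding map `π(ω) = ∑_k ω_k/N^k ∈ [0,1]^D` on infinite branches. -/
noncomputable def codingMap (D : ℕ) (N : ℕ → ℕ) (σ : ℕ → Fin D → ℕ) : Fin D → ℝ :=
  fun i => ∑' j : ℕ, (σ j i : ℝ) / (Npow N (j + 1) : ℝ)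


open scoped ENNReal Topology

noncomputable def hausdorffContentF {X : Type*} [MetricSpace X] (f : ℝ → ℝ) (ε : ℝ) (S : Set X) :
    ℝ≥0∞ :=
  ⨅ (c : ℕ → X × ℝ)
    (_ : (∀ i, 0 < (c i).2 ∧ (c i).2 ≤ ε) ∧ S ⊆ ⋃ i, Metric.closedBall (c i).1 (c i).2),
    ∑' i, ENNReal.ofReal (f (c i).2)

section Hausdorff

variable {X : Type*} [MetricSpace X] {f : ℝ → ℝ} {S : Set X}

theorem hausdorffF_eq_iSup_hausdorffContentF :
    hausdorffF f S = ⨆ (ε : ℝ) (_ : 0 < ε), hausdorffContentF f ε S := rfl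

theorem coverCount_le_card {ρ : ℝ} {F : Finset X} (hF : S ⊆ ⋃ x ∈ F, Metric.closedBall x ρ) :
    coverCount ρ S ≤ F.card :=
  iInf₂_le F hF

theorem hausdorffContentF_le_card_mul [Nonempty X]
    (hf0 : Tendsto f (𝓝[>] 0) (𝓝 0)) {ε ρ : ℝ} (hρ : 0 < ρ) (hρε : ρ ≤ ε) {F : Finset X}
    (hF : S ⊆ ⋃ x ∈ F, Metric.closedBall x ρ) :
    hausdorffContentF f ε S ≤ F.card * ENNReal.ofReal (f ρ) := by
  refine ENNReal.le_of_forall_pos_le_add fun δ hδ _ => ?_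
  obtain ⟨η, hη0, hη⟩ := ENNReal.exists_pos_sum_of_countable (ENNReal.coe_ne_zero.2 hδ.ne') ℕ
  have hsmall : ∀ i, ∃ r, (0 < r ∧ r ≤ ε) ∧ f r < η i := fun i =>
    ((hf0.eventually (gt_mem_nhds (hη0 i))).and (Ioc_mem_nhdsGT (hρ.trans_le hρε))).exists.imp
      fun r h => ⟨h.2, h.1⟩
  choose r hr using hsmall
  let c : ℕ → X × ℝ := fun i =>
    (F.toList.getD i (Classical.arbitrary X), if i < F.card then ρ else r i)
  have hc : (∀ i, 0 < (c i).2 ∧ (c i).2 ≤ ε) ∧ S ⊆ ⋃ i, Metric.closedBall (c i).1 (c i).2 := by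
    refine ⟨fun i => ?_, fun y hy => ?_⟩
    · by_cases hi : i < F.card
      · simpa [c, hi] using ⟨hρ, hρε⟩
      · simpa [c, hi] using (hr i).1
    · obtain ⟨x, hxF, hyx⟩ := Set.mem_iUnion₂.1 (hF hy)
      obtain ⟨j, hj, rfl⟩ := List.mem_iff_getElem.1 (Finset.mem_toList.2 hxF)
      have hjF : j < F.card := by simpa using hj
      refine Set.mem_iUnion.2 ⟨j, ?_⟩
      simpa [c, hjF, List.getD_eq_getElem _ _ hj] using hyx
  have hcost : ∀ i, ENNReal.ofReal (f (c i).2) ≤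
      (if i < F.card then ENNReal.ofReal (f ρ) else 0) + η i := by
    intro i
    by_cases hi : i < F.card
    · simp [c, hi]
    · simpa [c, hi] using ENNReal.ofReal_le_ofReal (hr i).2.le
  calc hausdorffContentF f ε S ≤ ∑' i, ENNReal.ofReal (f (c i).2) := iInf₂_le c hc
    _ ≤ ∑' i, ((if i < F.card then ENNReal.ofReal (f ρ) else 0) + η i) :=
      ENNReal.tsum_le_tsum hcost
    _ ≤ F.card * ENNReal.ofReal (f ρ) + δ := by
      rw [ENNReal.tsum_add, tsum_eq_sum (s := Finset.range F.card) (fun i hi => by simp_all),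
        Finset.sum_ite_of_true (fun i hi => Finset.mem_range.1 hi), Finset.sum_const,
        Finset.card_range, nsmul_eq_mul]
      gcongr

theorem hausdorffContentF_le_coverCount_mul [Nonempty X]
    (hf0 : Tendsto f (𝓝[>] 0) (𝓝 0)) {ε ρ : ℝ} (hρ : 0 < ρ) (hρε : ρ ≤ ε) (hfρ : 0 < f ρ) :
    hausdorffContentF f ε S ≤ coverCount ρ S * ENNReal.ofReal (f ρ) := by
  rw [coverCount, ENNReal.iInf_mul_of_ne (by simpa using hfρ) ENNReal.ofReal_ne_top]
  refine le_iInf fun F => ?_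
  rw [ENNReal.iInf_mul_of_ne (by simpa using hfρ) ENNReal.ofReal_ne_top]
  exact le_iInf fun hF => hausdorffContentF_le_card_mul hf0 hρ hρε hF

theorem hausdorffF_le_liminf_coverCount_mul [Nonempty X] (hf : ∀ ρ, 0 < ρ → 0 < f ρ)
    (hf0 : Tendsto f (𝓝[>] 0) (𝓝 0)) (S : Set X) :
    hausdorffF f S ≤ liminf (fun ρ => coverCount ρ S * ENNReal.ofReal (f ρ)) (𝓝[>] 0) := by
  rw [hausdorffF_eq_iSup_hausdorffContentF]
  refine iSup₂_le fun ε hε => le_liminf_of_le (by isBoundedDefault) ?_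
  filter_upwards [Ioc_mem_nhdsGT hε] with ρ hρ
  exact hausdorffContentF_le_coverCount_mul hf0 hρ.1 hρ.2 (hf ρ hρ.1)

end Hausdorff

section Coding

variable {N : ℕ → ℕ}

theorem Npow_succ (N : ℕ → ℕ) (k : ℕ) : Npow N (k + 1) = Npow N k * N k :=
  Finset.prod_range_succ N k

theorem Npow_pos (hN : ∀ j, 0 < N j) (k : ℕ) : 0 < Npow N k :=
  Finset.prod_pos fun j _ => hN j

theorem digit_div_Npow_succ_le (hN : ∀ j, 0 < N j) {d j : ℕ} (hd : d < N j) :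
    (d : ℝ) / Npow N (j + 1) ≤ (Npow N j : ℝ)⁻¹ - (Npow N (j + 1) : ℝ)⁻¹ := by
  have hP : (0 : ℝ) < Npow N j := by exact_mod_cast Npow_pos hN j
  have hn : (0 : ℝ) < N j := by exact_mod_cast hN j
  have hd' : (d : ℝ) ≤ N j - 1 := by
    have : (d : ℝ) + 1 ≤ N j := by exact_mod_cast hd
    linarith
  rw [Npow_succ, Nat.cast_mul]
  calc (d : ℝ) / (Npow N j * N j) ≤ (N j - 1) / (Npow N j * N j) := by gcongr
    _ = (Npow N j : ℝ)⁻¹ - (Npow N j * N j : ℝ)⁻¹ := by field_simp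

/-- The tail of a digit expansion telescopes against `1/N^j - 1/N^{j+1}`. -/
theorem sum_range_digit_div_Npow_le (hN : ∀ j, 0 < N j) {d : ℕ → ℕ} (hd : ∀ j, d j < N j)
    (k n : ℕ) :
    ∑ j ∈ Finset.range n, (d (j + k) : ℝ) / Npow N (j + k + 1) ≤ (Npow N k : ℝ)⁻¹ := by
  calc ∑ j ∈ Finset.range n, (d (j + k) : ℝ) / Npow N (j + k + 1)
      ≤ ∑ j ∈ Finset.range n, ((Npow N (j + k) : ℝ)⁻¹ - (Npow N (j + 1 + k) : ℝ)⁻¹) := by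
        refine Finset.sum_le_sum fun j _ => ?_
        rw [add_right_comm j 1 k]
        exact digit_div_Npow_succ_le hN (hd _)
    _ = (Npow N k : ℝ)⁻¹ - (Npow N (n + k) : ℝ)⁻¹ := by
        rw [Finset.sum_range_sub' (fun j => (Npow N (j + k) : ℝ)⁻¹), zero_add]
    _ ≤ (Npow N k : ℝ)⁻¹ := sub_le_self _ (by positivity)

theorem codingMap_mem_cylinder {D : ℕ} (hN : ∀ j, 0 < N j) {σ : ℕ → Fin D → ℕ}
    (hσ : ∀ j i, σ j i < N j) (k : ℕ) (i : Fin D) :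
    ∑ j ∈ Finset.range k, (σ j i : ℝ) / Npow N (j + 1) ≤ codingMap D N σ i ∧
      codingMap D N σ i ≤
        ∑ j ∈ Finset.range k, (σ j i : ℝ) / Npow N (j + 1) + (Npow N k : ℝ)⁻¹ := by
  have hsum : Summable fun j => (σ j i : ℝ) / Npow N (j + 1) :=
    summable_of_sum_range_le (fun _ => by positivity)
      (sum_range_digit_div_Npow_le hN (fun j => hσ j i) 0)
  rw [codingMap, ← hsum.sum_add_tsum_nat_add k]
  exact ⟨le_add_of_nonneg_right (tsum_nonneg fun _ => by positivity),
    add_le_add le_rfl (Real.tsum_le_of_sum_range_le (fun _ => by positivity)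
      (sum_range_digit_div_Npow_le hN (fun j => hσ j i) k))⟩

end Coding

theorem exists_abs_sub_add_half_le {m : ℕ} (hm : 0 < m) {u : ℝ} (hu0 : 0 ≤ u) (hum : u ≤ m) :
    ∃ l : Fin m, |u - (l + 1 / 2)| ≤ 1 / 2 := by
  refine ⟨⟨⌈u⌉₊ - 1, by have := Nat.ceil_le.2 hum; omega⟩, abs_le.2 ⟨?_, ?_⟩⟩
  · have : ((⌈u⌉₊ - 1 : ℕ) : ℝ) ≤ u := by
      rcases Nat.eq_zero_or_pos ⌈u⌉₊ with h | h
      · simpa [h] using hu0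
      · exact (Nat.lt_ceil.1 (by omega)).le
    linarith
  · have : (⌈u⌉₊ : ℝ) ≤ ((⌈u⌉₊ - 1 : ℕ) : ℝ) + 1 := by
      exact_mod_cast (by omega : ⌈u⌉₊ ≤ ⌈u⌉₊ - 1 + 1)
    linarith [Nat.le_ceil u]

theorem exists_nat_le_two_mul_mul_and_le_div {s ρ : ℝ} (hρ : 0 < ρ) (hρs : ρ ≤ s) :
    ∃ m : ℕ, s ≤ 2 * m * ρ ∧ (m : ℝ) ≤ s / ρ := by
  refine ⟨⌈s / (2 * ρ)⌉₊, ?_, ?_⟩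
  · have := Nat.le_ceil (s / (2 * ρ))
    rw [div_le_iff₀ (by positivity)] at this
    linarith
  · have := Nat.ceil_le_two_mul (a := s / (2 * ρ)) (by rw [le_div_iff₀ (by positivity)]; linarith)
    exact this.trans_eq (by field_simp)

/-- Closed balls of the sup metric are cubes of side `2ρ`, so `m ^ card ι` of them cover a cube
of side `s ≤ 2 m ρ`. -/
theorem coverCount_le_card_mul_pow {ι : Type*} [Fintype ι] {S : Set (ι → ℝ)}
    {A : Finset (ι → ℝ)} {s ρ : ℝ} {m : ℕ} (hs : 0 < s) (hsm : s ≤ 2 * m * ρ)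
    (hS : ∀ y ∈ S, ∃ x ∈ A, ∀ i, x i ≤ y i ∧ y i ≤ x i + s) :
    coverCount ρ S ≤ A.card * m ^ Fintype.card ι := by
  classical
  have hm : 0 < m := Nat.pos_of_ne_zero fun hm0 => by simp [hm0] at hsm; linarith
  have hρ : 0 ≤ ρ := by nlinarith [(m.cast_nonneg : (0 : ℝ) ≤ m)]
  let center : (ι → ℝ) × (ι → Fin m) → ι → ℝ := fun p i => p.1 i + (p.2 i + 1 / 2) * (s / m)
  refine (coverCount_le_card (F := (A ×ˢ Finset.univ).image center) ?_).trans ?_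
  · intro y hy
    obtain ⟨x, hxA, hxy⟩ := hS y hy
    have hl : ∀ i, ∃ l : Fin m, |(y i - x i) * m / s - (l + 1 / 2)| ≤ 1 / 2 := by
      intro i
      obtain ⟨hxi, hyi⟩ := hxy i
      refine exists_abs_sub_add_half_le hm (by have := sub_nonneg.2 hxi; positivity) ?_
      rw [div_le_iff₀ hs]
      nlinarith [(Nat.cast_nonneg m : (0 : ℝ) ≤ m)]
    choose v hv using hl
    refine Set.mem_biUnion (Finset.mem_image_of_mem center
      (a := (x, v)) (Finset.mem_product.2 ⟨hxA, Finset.mem_univ v⟩)) ?_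
    rw [Metric.mem_closedBall, dist_pi_le_iff hρ]
    intro i
    have hcenter : y i - center (x, v) i = ((y i - x i) * m / s - (v i + 1 / 2)) * (s / m) := by
      simp only [center]
      field_simp
      ring
    rw [Real.dist_eq, hcenter, abs_mul, abs_of_pos (by positivity : 0 < s / m)]
    calc |(y i - x i) * m / s - (v i + 1 / 2)| * (s / m) ≤ 1 / 2 * (s / m) := by
          gcongr
          exact hv i
      _ ≤ ρ := by
          rw [← mul_div_assoc, div_le_iff₀ (by positivity)]
          linarith
  · have := Finset.card_image_le (s := A ×ˢ Finset.univ) (f := center)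
    rw [Finset.card_product, Finset.card_univ, Fintype.card_fun, Fintype.card_fin] at this
    exact_mod_cast this

section Tree

variable {D : ℕ} {N : ℕ → ℕ} {T : Set (List (Fin D → ℕ))}

open Classical in
noncomputable def digitBox (D n : ℕ) : Finset (Fin D → ℕ) :=
  Fintype.piFinset fun _ => Finset.range n

open Classical in
noncomputable def treeChildren (T : Set (List (Fin D → ℕ))) (n : ℕ) (ω : List (Fin D → ℕ)) :
    Finset (Fin D → ℕ) :=
  (digitBox D n).filter fun a => ω ++ [a] ∈ T

open Classical in
/-- `T^k`, the nodes of `T` of length `k`. -/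
noncomputable def treeLevel (N : ℕ → ℕ) (T : Set (List (Fin D → ℕ))) :
    ℕ → Finset (List (Fin D → ℕ))
  | 0 => ({[]} : Finset _).filter (· ∈ T)
  | k + 1 => (treeLevel N T k).biUnion fun ω => (treeChildren T (N k) ω).image (ω ++ [·])

theorem mem_digitBox {n : ℕ} {a : Fin D → ℕ} : a ∈ digitBox D n ↔ ∀ i, a i < n := by
  simp [digitBox]

theorem mem_of_mem_treeLevel {k : ℕ} {ω : List (Fin D → ℕ)} (hω : ω ∈ treeLevel N T k) :
    ω ∈ T ∧ ω.length = k := by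
  induction k generalizing ω with
  | zero =>
    obtain ⟨rfl, hω⟩ : ω = [] ∧ ω ∈ T := by simpa [treeLevel] using hω
    exact ⟨hω, rfl⟩
  | succ k ih =>
    simp only [treeLevel, Finset.mem_biUnion, Finset.mem_image, treeChildren,
      Finset.mem_filter] at hω
    obtain ⟨ω', hω', a, ⟨_, haT⟩, rfl⟩ := hω
    simpa [(ih hω').2] using haT

theorem ofFn_mem_treeLevel {σ : ℕ → Fin D → ℕ} (hσT : σ ∈ branches D T)
    (hσ : ∀ j i, σ j i < N j) (k : ℕ) :
    List.ofFn (fun j : Fin k => σ j) ∈ treeLevel N T k := by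
  induction k with
  | zero => simpa [treeLevel] using hσT 0
  | succ k ih =>
    have hsnoc : List.ofFn (fun j : Fin (k + 1) => σ j) =
        List.ofFn (fun j : Fin k => σ j) ++ [σ k] := by
      rw [List.ofFn_succ', List.concat_eq_append]
      rfl
    simp only [treeLevel, Finset.mem_biUnion, Finset.mem_image, treeChildren, Finset.mem_filter]
    exact ⟨_, ih, σ k, ⟨mem_digitBox.2 (hσ k), hsnoc ▸ hσT (k + 1)⟩, hsnoc.symm⟩

open Classical in
theorem card_treeChildren_add_ncard_removed (ω : List (Fin D → ℕ)) (k : ℕ) :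
    (treeChildren T (N k) ω).card + {a : Fin D → ℕ | (∀ i, a i < N k) ∧ ω ++ [a] ∉ T}.ncard =
      N k ^ D := by
  have hrem : {a : Fin D → ℕ | (∀ i, a i < N k) ∧ ω ++ [a] ∉ T} =
      ↑((digitBox D (N k)).filter fun a => ω ++ [a] ∉ T) := by
    ext a
    simp [mem_digitBox]
  rw [hrem, Set.ncard_coe_finset, treeChildren, Finset.card_filter_add_card_filter_not, digitBox,
    Fintype.card_piFinset]
  simp

theorem Pminus_le_of_mem {k : ℕ} {ω : List (Fin D → ℕ)} (hω : ω ∈ T) (hlen : ω.length = k) :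
    Pminus D N T k ≤
      {a : Fin D → ℕ | (∀ i, a i < N k) ∧ ω ++ [a] ∉ T}.ncard / (N k : ℝ) ^ D := by
  refine csInf_le ⟨0, ?_⟩ ⟨ω, hω, hlen, rfl⟩
  rintro x ⟨_, _, _, rfl⟩
  positivity

theorem Pminus_le_one (k : ℕ) : Pminus D N T k ≤ 1 := by
  by_cases h : ∃ ω ∈ T, ω.length = k
  · obtain ⟨ω, hω, hlen⟩ := h
    refine (Pminus_le_of_mem hω hlen).trans (div_le_one_of_le₀ ?_ (by positivity))
    exact_mod_cast (card_treeChildren_add_ncard_removed ω k).symm ▸ Nat.le_add_left _ _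
  · simp only [not_exists, not_and] at h
    have hempty : {x : ℝ | ∃ ω ∈ T, ω.length = k ∧ x =
        ({a : Fin D → ℕ | (∀ i, a i < N k) ∧ ω ++ [a] ∉ T}.ncard : ℝ) / (N k : ℝ) ^ D} = ∅ :=
      Set.eq_empty_of_forall_notMem fun x ⟨ω, hω, hlen, _⟩ => h ω hω hlen
    rw [Pminus, hempty, Real.sInf_empty]
    exact zero_le_one

theorem card_treeChildren_le (hN : ∀ j, 0 < N j) {k : ℕ} {ω : List (Fin D → ℕ)} (hω : ω ∈ T)
    (hlen : ω.length = k) :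
    ((treeChildren T (N k) ω).card : ℝ) ≤ (N k : ℝ) ^ D * (1 - Pminus D N T k) := by
  have hsplit : ((treeChildren T (N k) ω).card : ℝ) +
      {a : Fin D → ℕ | (∀ i, a i < N k) ∧ ω ++ [a] ∉ T}.ncard = (N k : ℝ) ^ D := by
    exact_mod_cast card_treeChildren_add_ncard_removed ω k
  have hP := Pminus_le_of_mem (N := N) hω hlen
  rw [le_div_iff₀ (by have := hN k; positivity)] at hP
  nlinarith

theorem card_treeLevel_le (hN : ∀ j, 0 < N j) (k : ℕ) :
    ((treeLevel N T k).card : ℝ) ≤ ∏ j ∈ Finset.range k, (N j : ℝ) ^ D * (1 - Pminus D N T j) := by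
  classical
  induction k with
  | zero =>
    simpa [treeLevel] using Finset.card_filter_le ({[]} : Finset (List (Fin D → ℕ))) (· ∈ T)
  | succ k ih =>
    have hstep : ((treeLevel N T (k + 1)).card : ℝ) ≤
        ∑ ω ∈ treeLevel N T k, ((treeChildren T (N k) ω).card : ℝ) := by
      rw [treeLevel]
      exact_mod_cast Finset.card_biUnion_le.trans
        (Finset.sum_le_sum fun ω _ => Finset.card_image_le)
    have hfactor : 0 ≤ (N k : ℝ) ^ D * (1 - Pminus D N T k) :=
      mul_nonneg (by positivity) (sub_nonneg.2 (Pminus_le_one k))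
    calc ((treeLevel N T (k + 1)).card : ℝ)
        ≤ ∑ ω ∈ treeLevel N T k, (N k : ℝ) ^ D * (1 - Pminus D N T k) :=
          hstep.trans (Finset.sum_le_sum fun ω hω =>
            card_treeChildren_le hN (mem_of_mem_treeLevel hω).1 (mem_of_mem_treeLevel hω).2)
      _ = (treeLevel N T k).card * ((N k : ℝ) ^ D * (1 - Pminus D N T k)) := by
          rw [Finset.sum_const, nsmul_eq_mul]
      _ ≤ _ := by
          rw [Finset.prod_range_succ]
          exact mul_le_mul_of_nonneg_right ih hfactor

end Tree

section Branches

variable {D : ℕ} {N : ℕ → ℕ} {T : Set (List (Fin D → ℕ))}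

theorem le_inv_Npow_kIdx (hN : ∀ j, 2 ≤ N j) {ρ : ℝ} (hρ : 0 < ρ) (hρ1 : ρ ≤ 1) :
    ρ ≤ (Npow N (kIdx N ρ) : ℝ)⁻¹ := by
  have hbdd : BddAbove {k : ℕ | ρ ≤ (Npow N k : ℝ)⁻¹} := by
    refine ⟨⌈ρ⁻¹⌉₊, fun k hk => ?_⟩
    have h2k : 2 ^ k ≤ Npow N k := by
      have := Finset.pow_card_le_prod (Finset.range k) N 2 fun j _ => hN j
      rwa [Finset.card_range] at this
    have hkN : (k : ℝ) < Npow N k := by exact_mod_cast Nat.lt_two_pow_self.trans_le h2k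
    have hNρ : (Npow N k : ℝ) ≤ ρ⁻¹ := (le_inv_comm₀ hρ (k.cast_nonneg.trans_lt hkN)).1 hk
    exact_mod_cast (hkN.le.trans hNρ).trans (Nat.le_ceil _)
  exact Nat.sSup_mem ⟨0, by simpa [Npow] using hρ1⟩ hbdd

theorem fminus_inv (ρ : ℝ) :
    (fminus D N T ρ)⁻¹ = (∏ j ∈ Finset.range (kIdx N ρ), (1 - Pminus D N T j)) * (ρ ^ D)⁻¹ := by
  rw [fminus, mul_inv, ← Finset.prod_inv_distrib]
  simp only [inv_inv]

theorem card_treeLevel_mul_pow_le_inv_fminus (hN : ∀ j, 0 < N j) {ρ : ℝ} (hρ : 0 < ρ) {m : ℕ}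
    (hm : (m : ℝ) ≤ (Npow N (kIdx N ρ) : ℝ)⁻¹ / ρ) :
    ((treeLevel N T (kIdx N ρ)).card : ℝ) * m ^ D ≤ (fminus D N T ρ)⁻¹ := by
  rw [fminus_inv]
  set k := kIdx N ρ
  have hP : (0 : ℝ) < Npow N k := by exact_mod_cast Npow_pos hN k
  have hprod : ∏ j ∈ Finset.range k, (N j : ℝ) ^ D * (1 - Pminus D N T j) =
      (Npow N k : ℝ) ^ D * ∏ j ∈ Finset.range k, (1 - Pminus D N T j) := by
    rw [Finset.prod_mul_distrib, Finset.prod_pow, Npow, Nat.cast_prod]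
  have hnonneg : 0 ≤ ∏ j ∈ Finset.range k, (1 - Pminus D N T j) :=
    Finset.prod_nonneg fun j _ => sub_nonneg.2 (Pminus_le_one j)
  calc ((treeLevel N T k).card : ℝ) * m ^ D
      ≤ ((Npow N k : ℝ) ^ D * ∏ j ∈ Finset.range k, (1 - Pminus D N T j)) *
          ((Npow N k : ℝ)⁻¹ / ρ) ^ D :=
        mul_le_mul (hprod ▸ card_treeLevel_le hN k) (pow_le_pow_left₀ m.cast_nonneg hm D)
          (by positivity) (by positivity)
    _ = (∏ j ∈ Finset.range k, (1 - Pminus D N T j)) * (ρ ^ D)⁻¹ := by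
        rw [div_pow, inv_pow]
        field_simp

/-- `π(ω)` for a finite string `ω`: the corner of the cylinder cube of `ω`. -/
noncomputable def stringCoding (N : ℕ → ℕ) (ω : List (Fin D → ℕ)) : Fin D → ℝ :=
  fun i => ∑ j ∈ Finset.range ω.length, ((ω.getD j 0) i : ℝ) / Npow N (j + 1)

theorem stringCoding_ofFn (σ : ℕ → Fin D → ℕ) (k : ℕ) (i : Fin D) :
    stringCoding N (List.ofFn fun j : Fin k => σ j) i =
      ∑ j ∈ Finset.range k, (σ j i : ℝ) / Npow N (j + 1) := by
  rw [stringCoding, List.length_ofFn]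
  exact Finset.sum_congr rfl fun j hj => by
    rw [List.getD_eq_getElem _ _ (by simpa using hj), List.getElem_ofFn]

theorem digit_lt_of_mem_branches (hT : ∀ ω ∈ T, validStr D N ω) {σ : ℕ → Fin D → ℕ}
    (hσ : σ ∈ branches D T) (j : ℕ) (i : Fin D) : σ j i < N j := by
  simpa using hT _ (hσ (j + 1)) j (by simp) i

theorem exists_stringCoding_le_codingMap_le (hN : ∀ j, 0 < N j)
    (hT : ∀ ω ∈ T, validStr D N ω) (k : ℕ) {σ : ℕ → Fin D → ℕ} (hσT : σ ∈ branches D T) :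
    ∃ x ∈ (treeLevel N T k).image (stringCoding N),
      ∀ i, x i ≤ codingMap D N σ i ∧ codingMap D N σ i ≤ x i + (Npow N k : ℝ)⁻¹ := by
  have hσ := digit_lt_of_mem_branches hT hσT
  refine ⟨_, Finset.mem_image_of_mem _ (ofFn_mem_treeLevel hσT hσ k), fun i => ?_⟩
  rw [stringCoding_ofFn]
  exact codingMap_mem_cylinder hN hσ k i

theorem coverCount_codingMap_branches_le (hN : ∀ j, 2 ≤ N j) (hT : ∀ ω ∈ T, validStr D N ω)
    {ρ : ℝ} (hρ : 0 < ρ) (hρ1 : ρ ≤ 1) :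
    coverCount ρ (codingMap D N '' branches D T) ≤ ENNReal.ofReal (fminus D N T ρ)⁻¹ := by
  have hN0 : ∀ j, 0 < N j := fun j => two_pos.trans_le (hN j)
  set k := kIdx N ρ
  have hs : 0 < (Npow N k : ℝ)⁻¹ := inv_pos.2 (by exact_mod_cast Npow_pos hN0 k)
  obtain ⟨m, hsm, hm⟩ := exists_nat_le_two_mul_mul_and_le_div hρ (le_inv_Npow_kIdx hN hρ hρ1)
  have hcover := coverCount_le_card_mul_pow (S := codingMap D N '' branches D T) hs hsm <| by
    rintro _ ⟨σ, hσT, rfl⟩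
    exact exists_stringCoding_le_codingMap_le hN0 hT k hσT
  rw [Fintype.card_fin] at hcover
  calc coverCount ρ (codingMap D N '' branches D T)
      ≤ (((treeLevel N T k).image (stringCoding N)).card * m ^ D : ℕ) := by exact_mod_cast hcover
    _ = ENNReal.ofReal (((treeLevel N T k).image (stringCoding N)).card * m ^ D : ℕ) :=
        (ENNReal.ofReal_natCast _).symm
    _ ≤ ENNReal.ofReal (fminus D N T ρ)⁻¹ := by
        refine ENNReal.ofReal_le_ofReal ?_
        push_cast
        refine le_trans ?_ (card_treeLevel_mul_pow_le_inv_fminus hN0 hρ hm)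
        gcongr
        exact_mod_cast Finset.card_image_le

end Branches

theorem stmt_16_general (D : ℕ) :
    ∃ C : ℝ, 0 < C ∧
      ∀ N : ℕ → ℕ, (∀ k, 2 ≤ N k) →
      ∀ T : Set (List (Fin D → ℕ)), IsTree D N T →
      ∀ f : ℝ → ℝ, (∀ ρ, 0 < ρ → 0 < f ρ) → MonotoneOn f (Set.Ioi 0) →
        Tendsto f (nhdsWithin 0 (Set.Ioi 0)) (nhds 0) →
      hausdorffF f (codingMap D N '' branches D T) ≤
          liminf (fun ρ => coverCount ρ (codingMap D N '' branches D T) * ENNReal.ofReal (f ρ))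
            (nhdsWithin 0 (Set.Ioi 0)) ∧
        liminf (fun ρ => coverCount ρ (codingMap D N '' branches D T) * ENNReal.ofReal (f ρ))
            (nhdsWithin 0 (Set.Ioi 0)) ≤
          ENNReal.ofReal C *
            liminf (fun ρ => ENNReal.ofReal (f ρ / fminus D N T ρ)) (nhdsWithin 0 (Set.Ioi 0)) := by
  refine ⟨1, one_pos, fun N hN T hT f hf _ hf0 =>
    ⟨hausdorffF_le_liminf_coverCount_mul hf hf0 _, ?_⟩⟩
  rw [ENNReal.ofReal_one, one_mul]
  refine liminf_le_liminf ?_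
  filter_upwards [Ioc_mem_nhdsGT one_pos] with ρ hρ
  calc coverCount ρ (codingMap D N '' branches D T) * ENNReal.ofReal (f ρ)
      ≤ ENNReal.ofReal (fminus D N T ρ)⁻¹ * ENNReal.ofReal (f ρ) := by
        gcongr
        exact coverCount_codingMap_branches_le hN hT.1 hρ.1 hρ.2
    _ = ENNReal.ofReal (f ρ / fminus D N T ρ) := by
        rw [div_eq_mul_inv, mul_comm, ENNReal.ofReal_mul (hf ρ hρ.1).le]

/-- Proposition 2.2(ii): for any tree `T*` and dimension function `f`,
`H^f(π(T^∞)) ≤ liminf_{ρ→0} N_ρ(π(T^∞))·f(ρ) ≤ C·liminf_{ρ→0} f(ρ)/f_-(ρ)`, with `C`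
depending only on `D` and the norm. -/
theorem stmt_16 (D : ℕ) (hD : 1 ≤ D) :
    ∃ C : ℝ, 0 < C ∧
      ∀ N : ℕ → ℕ, (∀ k, 2 ≤ N k) →
      ∀ T : Set (List (Fin D → ℕ)), IsTree D N T →
      ∀ f : ℝ → ℝ, (∀ ρ, 0 < ρ → 0 < f ρ) → MonotoneOn f (Set.Ioi 0) →
        Tendsto f (nhdsWithin 0 (Set.Ioi 0)) (nhds 0) →
      hausdorffF f (codingMap D N '' branches D T) ≤
          liminf (fun ρ => coverCount ρ (codingMap D N '' branches D T) * ENNReal.ofReal (f ρ))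
            (nhdsWithin 0 (Set.Ioi 0)) ∧
        liminf (fun ρ => coverCount ρ (codingMap D N '' branches D T) * ENNReal.ofReal (f ρ))
            (nhdsWithin 0 (Set.Ioi 0)) ≤
          ENNReal.ofReal C *
            liminf (fun ρ => ENNReal.ofReal (f ρ / fminus D N T ρ)) (nhdsWithin 0 (Set.Ioi 0)) :=
  stmt_16_general D
end

section
/- Suppose ψ : (0,∞) → (0,∞) satisfies ψ/ψ_* nonincreasing and ψ(q)/ψ_*(q) → 0 as q → ∞, and the series Σ q^{n−1}ψ^m(q) diverges, where ψ_*(q) = q^{−n/m}. Define f(ρ) = ρ^{mn}·exp(F_ψ(ρ^{−m/(m+n)})) for ρ ≤ ρ₀ and f(ρ) = f(ρ₀) for ρ > ρ₀, where F_ψ(Q) = ∫₁^Q q^{n−1}ψ^m(q) dq. Then for ρ₀ sufficiently small, f is a dimension function (nondecreasing with f(ρ) → 0 as ρ → 0), and for every γ > 0, L_{f,γψ} := liminf_{ρ→0} log(f(ρ)/ρ^{mn}) / F_{γψ}(ρ^{−m/(m+n)}) = γ^{−m}. -/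
/-!
Since `ψ/ψ_*` tends to `0`, beyond some `Q₀` the integrand `q^{n-1} ψ(q)^m = (ψ/ψ_*)(q)^m / q` is
at most `1/q`, so `F_ψ(Q) - log Q` is nonincreasing for `Q ≥ Q₀`. With `e = -m/(m+n) ∈ (-1, 0)`,
`log f(ρ) = mn log ρ + F_ψ(ρ^e)` is then the sum of the nondecreasing function
`F_ψ(ρ^e) - log(ρ^e)` and `(mn + e) log ρ`, which is nondecreasing and tends to `-∞` as `ρ → 0`.
Finally `log(f(ρ)/ρ^{mn}) = F_ψ(ρ^e)` and `F_{γψ} = γ^m F_ψ`, so the ratio in the liminf is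
eventually the constant `γ^{-m}`.
-/

open MeasureTheory Filter Set Real Topology

section KhinchinIntegral

variable {m n : ℕ} {ψ : ℝ → ℝ}

lemma pow_sub_one_mul_pow_eq_div (hm : m ≠ 0) (hn : 1 ≤ n) {q : ℝ} (hq : 0 < q) :
    q ^ (n - 1) * ψ q ^ m = (ψ q * q ^ ((n : ℝ) / m)) ^ m / q := by
  have hpow : (q ^ ((n : ℝ) / m)) ^ m = q ^ n := by
    rw [← rpow_natCast _ m, ← rpow_mul hq.le, div_mul_cancel₀ _ (Nat.cast_ne_zero.mpr hm),
      rpow_natCast]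
  have hsucc : q ^ n = q ^ (n - 1) * q := by rw [← pow_succ, Nat.sub_add_cancel hn]
  rw [mul_pow, hpow, hsucc]
  field_simp

variable (hm : m ≠ 0) (hn : 1 ≤ n) (hψ : ∀ q, 0 < q → 0 < ψ q)
  (hmono : AntitoneOn (fun q => ψ q * q ^ ((n : ℝ) / m)) (Ioi 0))
include hm hn hψ hmono

lemma intervalIntegrable_pow_sub_one_mul_pow {x y : ℝ} (hx : 0 < x) (hy : 0 < y) :
    IntervalIntegrable (fun q => q ^ (n - 1) * ψ q ^ m) volume x y := by
  have hsub : uIcc x y ⊆ Ioi 0 := fun q hq => (lt_min hx hy).trans_le hq.1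
  have hanti : AntitoneOn (fun q => (ψ q * q ^ ((n : ℝ) / m)) ^ m) (uIcc x y) :=
    fun a ha b hb hab => pow_le_pow_left₀
      (mul_nonneg (hψ b (hsub hb)).le (rpow_nonneg (hsub hb).out.le _))
      (hmono (hsub ha) (hsub hb) hab) m
  refine IntervalIntegrable.congr (fun q hq => ?_) <|
    hanti.intervalIntegrable.mul_continuousOn <|
      continuousOn_inv₀.mono fun q hq => (hsub hq).out.ne'
  rw [pow_sub_one_mul_pow_eq_div hm hn (hsub (uIoc_subset_uIcc hq))]
  exact (div_eq_mul_inv _ _).symm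

lemma integral_pow_sub_one_mul_pow_le_log_sub {a b : ℝ} (ha : 0 < a) (hab : a ≤ b)
    (hle : ∀ q ∈ Icc a b, ψ q * q ^ ((n : ℝ) / m) ≤ 1) :
    ∫ q in a..b, q ^ (n - 1) * ψ q ^ m ≤ log b - log a := by
  have hb := ha.trans_le hab
  have hzero : (0 : ℝ) ∉ uIcc a b := by
    rw [uIcc_of_le hab]; exact fun h => (ha.trans_le h.1).false
  rw [← log_div hb.ne' ha.ne', ← integral_inv hzero]
  refine intervalIntegral.integral_mono_on hab
    (intervalIntegrable_pow_sub_one_mul_pow hm hn hψ hmono ha hb)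
    (intervalIntegral.intervalIntegrable_inv (fun _ hq => ne_of_mem_of_not_mem hq hzero)
      continuousOn_id) fun q hq => ?_
  have hq0 := ha.trans_le hq.1
  rw [pow_sub_one_mul_pow_eq_div hm hn hq0, ← one_div]
  exact div_le_div_of_nonneg_right
    (pow_le_one₀ (mul_nonneg (hψ q hq0).le (rpow_nonneg hq0.le _)) (hle q hq)) hq0.le

lemma antitoneOn_integral_pow_sub_one_mul_pow_sub_log {Q₀ : ℝ} (hQ₀ : 0 < Q₀)
    (hle : ∀ q, Q₀ ≤ q → ψ q * q ^ ((n : ℝ) / m) ≤ 1) :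
    AntitoneOn (fun Q => (∫ q in (1 : ℝ)..Q, q ^ (n - 1) * ψ q ^ m) - log Q) (Ici Q₀) := by
  intro a ha b _ hab
  have ha0 : 0 < a := hQ₀.trans_le ha
  have hsplit := intervalIntegral.integral_interval_sub_left
    (intervalIntegrable_pow_sub_one_mul_pow hm hn hψ hmono one_pos (ha0.trans_le hab))
    (intervalIntegrable_pow_sub_one_mul_pow hm hn hψ hmono one_pos ha0)
  have hlog := integral_pow_sub_one_mul_pow_le_log_sub hm hn hψ hmono ha0 hab
    fun q hq => hle q (le_trans ha hq.1)
  dsimp only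
  linarith

lemma integral_pow_sub_one_mul_pow_pos {Q : ℝ} (hQ : 1 < Q) :
    0 < ∫ q in (1 : ℝ)..Q, q ^ (n - 1) * ψ q ^ m :=
  intervalIntegral.intervalIntegral_pos_of_pos_on
    (intervalIntegrable_pow_sub_one_mul_pow hm hn hψ hmono one_pos (one_pos.trans hQ))
    (fun q hq => mul_pos (pow_pos (one_pos.trans hq.1) _) (pow_pos (hψ q (one_pos.trans hq.1)) _))
    hQ

end KhinchinIntegral

lemma integral_pow_sub_one_mul_const_mul_pow (m n : ℕ) (ψ : ℝ → ℝ) (γ a b : ℝ) :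
    ∫ q in a..b, q ^ (n - 1) * (γ * ψ q) ^ m = γ ^ m * ∫ q in a..b, q ^ (n - 1) * ψ q ^ m := by
  simp_rw [mul_pow, mul_left_comm _ (γ ^ m)]
  exact intervalIntegral.integral_const_mul _ _

section DimensionFunction

variable {F : ℝ → ℝ} {Q₀ ρ₀ e : ℝ} {k : ℕ}

lemma pow_mul_exp_eq_exp_mul_log_add {ρ : ℝ} (hρ : 0 < ρ) (x : ℝ) :
    ρ ^ k * exp x = exp (k * log ρ + x) := by
  rw [exp_add, ← log_pow, exp_log (pow_pos hρ k)]

lemma monotoneOn_comp_rpow_sub_mul_log (hF : AntitoneOn (fun Q => F Q - log Q) (Ici Q₀))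
    (he : e ≤ 0) (hQ₀ : Q₀ ≤ ρ₀ ^ e) :
    MonotoneOn (fun ρ => F (ρ ^ e) - e * log ρ) (Ioc 0 ρ₀) := by
  intro a ha b hb hab
  have hmem : ∀ ρ ∈ Ioc 0 ρ₀, ρ ^ e ∈ Ici Q₀ :=
    fun ρ hρ => hQ₀.trans (rpow_le_rpow_of_nonpos hρ.1 hρ.2 he)
  simpa only [log_rpow ha.1, log_rpow hb.1] using
    hF (hmem b hb) (hmem a ha) (rpow_le_rpow_of_nonpos ha.1 hab he)

lemma monotoneOn_pow_mul_exp_comp_rpow (hF : AntitoneOn (fun Q => F Q - log Q) (Ici Q₀))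
    (hke : -(k : ℝ) ≤ e) (he : e ≤ 0) (hQ₀ : Q₀ ≤ ρ₀ ^ e) :
    MonotoneOn (fun ρ => ρ ^ k * exp (F (ρ ^ e))) (Ioc 0 ρ₀) := by
  have hlog : MonotoneOn (fun ρ => (k + e) * log ρ) (Ioc 0 ρ₀) := fun a ha _ _ hab =>
    mul_le_mul_of_nonneg_left (log_le_log ha.1 hab) (by linarith)
  refine (exp_monotone.comp_monotoneOn
    ((monotoneOn_comp_rpow_sub_mul_log hF he hQ₀).add hlog)).congr fun ρ hρ => ?_
  rw [Function.comp_apply, pow_mul_exp_eq_exp_mul_log_add hρ.1]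
  congr 1
  ring

lemma tendsto_pow_mul_exp_comp_rpow_nhdsGT_zero
    (hF : AntitoneOn (fun Q => F Q - log Q) (Ici Q₀))
    (hke : -(k : ℝ) < e) (he : e ≤ 0) (hρ₀ : 0 < ρ₀) (hQ₀ : Q₀ ≤ ρ₀ ^ e) :
    Tendsto (fun ρ => ρ ^ k * exp (F (ρ ^ e))) (𝓝[>] 0) (𝓝 0) := by
  set C := F (ρ₀ ^ e) - e * log ρ₀
  have hbound : ∀ ρ ∈ Ioc 0 ρ₀, ρ ^ k * exp (F (ρ ^ e)) ≤ exp ((k + e) * log ρ + C) := by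
    intro ρ hρ
    have hle := monotoneOn_comp_rpow_sub_mul_log hF he hQ₀ hρ ⟨hρ₀, le_rfl⟩ hρ.2
    rw [pow_mul_exp_eq_exp_mul_log_add hρ.1]
    exact exp_le_exp.2 (by linarith)
  have hlim : Tendsto (fun ρ => exp ((k + e) * log ρ + C)) (𝓝[>] 0) (𝓝 0) :=
    tendsto_exp_atBot.comp <| tendsto_atBot_add_const_right _ C <|
      tendsto_log_nhdsGT_zero.const_mul_atBot (by linarith)
  refine squeeze_zero' ?_ ?_ hlim
  · filter_upwards [self_mem_nhdsWithin] with ρ (hρ : 0 < ρ)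
    positivity
  · filter_upwards [Ioc_mem_nhdsGT hρ₀] using hbound

lemma isDimensionFunction_of_eq_ite (hF : AntitoneOn (fun Q => F Q - log Q) (Ici Q₀))
    (hke : -(k : ℝ) < e) (he : e ≤ 0) (hρ₀ : 0 < ρ₀) (hQ₀ : Q₀ ≤ ρ₀ ^ e) {f : ℝ → ℝ}
    (hf : f = fun ρ => if ρ ≤ ρ₀ then ρ ^ k * exp (F (ρ ^ e)) else ρ₀ ^ k * exp (F (ρ₀ ^ e))) :
    (∀ ρ, 0 < ρ → 0 < f ρ) ∧ MonotoneOn f (Ioi 0) ∧ Tendsto f (𝓝[>] 0) (𝓝 0) := by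
  have hmin : ∀ ρ, f ρ = (min ρ ρ₀) ^ k * exp (F ((min ρ ρ₀) ^ e)) := fun ρ => by
    simp only [hf, min_def]; split_ifs <;> rfl
  refine ⟨fun ρ hρ => ?_, fun a ha b hb hab => ?_, ?_⟩
  · rw [hmin]; exact mul_pos (pow_pos (lt_min hρ hρ₀) k) (exp_pos _)
  · rw [hmin, hmin]
    exact monotoneOn_pow_mul_exp_comp_rpow hF hke.le he hQ₀
      ⟨lt_min ha hρ₀, min_le_right _ _⟩ ⟨lt_min hb hρ₀, min_le_right _ _⟩ (min_le_min_right _ hab)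
  · refine (tendsto_pow_mul_exp_comp_rpow_nhdsGT_zero hF hke he hρ₀ hQ₀).congr' ?_
    filter_upwards [Ioc_mem_nhdsGT hρ₀] with ρ hρ
    rw [hmin, min_eq_left hρ.2]

end DimensionFunction

lemma neg_natCast_div_add_neg {m n : ℕ} (hm : m ≠ 0) : -(m : ℝ) / (m + n) < 0 :=
  div_neg_of_neg_of_pos (by simpa using Nat.pos_of_ne_zero hm) (by positivity)

lemma neg_natCast_mul_lt_neg_div_add {m n : ℕ} (hm : m ≠ 0) (hn : n ≠ 0) :
    -((m * n : ℕ) : ℝ) < -(m : ℝ) / (m + n) := by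
  have hmn : (1 : ℝ) ≤ ((m * n : ℕ) : ℝ) := by exact_mod_cast Nat.one_le_iff_ne_zero.2 (by positivity)
  have hlt : (m : ℝ) / (m + n) < 1 := by
    rw [div_lt_one (by positivity), lt_add_iff_pos_right]
    positivity
  rw [neg_div]
  linarith

theorem stmt_18_general (m n : ℕ) (hm : 1 ≤ m) (hn : 1 ≤ n)
    (ψ : ℝ → ℝ) (hψpos : ∀ q, 0 < q → 0 < ψ q)
    (hmono : AntitoneOn (fun q => ψ q * q ^ ((n : ℝ) / (m : ℝ))) (Set.Ioi 0))
    (hlim : Tendsto (fun q => ψ q * q ^ ((n : ℝ) / (m : ℝ))) atTop (nhds 0)) :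
    ∃ ρ₀ : ℝ, 0 < ρ₀ ∧
      ∀ f : ℝ → ℝ,
        (f = fun ρ => if ρ ≤ ρ₀ then
            ρ ^ (m * n) * Real.exp (∫ q in (1 : ℝ)..(ρ ^ (-(m : ℝ) / ((m : ℝ) + (n : ℝ)))),
              q ^ (n - 1) * ψ q ^ m)
          else
            ρ₀ ^ (m * n) * Real.exp (∫ q in (1 : ℝ)..(ρ₀ ^ (-(m : ℝ) / ((m : ℝ) + (n : ℝ)))),
              q ^ (n - 1) * ψ q ^ m)) →
        ((∀ ρ, 0 < ρ → 0 < f ρ) ∧ MonotoneOn f (Set.Ioi 0) ∧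
            Tendsto f (nhdsWithin 0 (Set.Ioi 0)) (nhds 0)) ∧
          ∀ γ : ℝ, 0 < γ →
            liminf (fun ρ => Real.log (f ρ / ρ ^ (m * n)) /
                (∫ q in (1 : ℝ)..(ρ ^ (-(m : ℝ) / ((m : ℝ) + (n : ℝ)))),
                  q ^ (n - 1) * (γ * ψ q) ^ m))
              (nhdsWithin 0 (Set.Ioi 0)) = γ ^ (-(m : ℤ)) := by
  have hm0 : m ≠ 0 := by omega
  set e : ℝ := -(m : ℝ) / ((m : ℝ) + (n : ℝ))
  have he : e < 0 := neg_natCast_div_add_neg hm0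
  have hke : -((m * n : ℕ) : ℝ) < e := neg_natCast_mul_lt_neg_div_add hm0 (by omega)
  obtain ⟨Q₁, hQ₁⟩ := eventually_atTop.mp (hlim.eventually_lt_const one_pos)
  set Q₀ := max 2 Q₁
  have hF := antitoneOn_integral_pow_sub_one_mul_pow_sub_log hm0 hn hψpos hmono
    (Q₀ := Q₀) (by positivity) fun q hq => (hQ₁ q (le_of_max_le_right hq)).le
  have hρ₀ : (Q₀ ^ e⁻¹) ^ e = Q₀ := rpow_inv_rpow (by positivity) he.ne
  refine ⟨Q₀ ^ e⁻¹, by positivity, fun f hf => ⟨isDimensionFunction_of_eq_ite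
    (F := fun Q => ∫ q in (1 : ℝ)..Q, q ^ (n - 1) * ψ q ^ m) hF hke he.le (by positivity) hρ₀.ge hf,
    fun γ hγ => ?_⟩⟩
  rw [zpow_neg, zpow_natCast]
  refine (liminf_congr ?_).trans (liminf_const _)
  filter_upwards [Ioc_mem_nhdsGT (by positivity : (0 : ℝ) < Q₀ ^ e⁻¹)] with ρ hρ
  have hQ : 1 < ρ ^ e := calc
    (1 : ℝ) < Q₀ := one_lt_two.trans_le (le_max_left _ _)
    _ = (Q₀ ^ e⁻¹) ^ e := hρ₀.symm
    _ ≤ ρ ^ e := rpow_le_rpow_of_nonpos hρ.1 hρ.2 he.le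
  simp only [hf]
  rw [if_pos hρ.2, mul_div_cancel_left₀ _ (pow_pos hρ.1 _).ne', log_exp,
    integral_pow_sub_one_mul_const_mul_pow,
    div_mul_cancel_right₀ (integral_pow_sub_one_mul_pow_pos hm0 hn hψpos hmono hQ).ne']

/-- Construction from the proof of Corollary 1.6: if `ψ/ψ_*` is nonincreasing and tends
to `0`, and the Khinchin series diverges, then for `ρ₀` sufficiently small the function
`f(ρ) = ρ^{mn}·exp(F_ψ(ρ^{-m/(m+n)}))` (truncated at `ρ₀`) is a dimension function and
`L_{f,γψ} = liminf_{ρ→0} log(f(ρ)/ρ^{mn})/F_{γψ}(ρ^{-m/(m+n)}) = γ^{-m}` for all `γ > 0`. -/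
theorem stmt_18 (m n : ℕ) (hm : 1 ≤ m) (hn : 1 ≤ n)
    (ψ : ℝ → ℝ) (hψpos : ∀ q, 0 < q → 0 < ψ q)
    (hmono : AntitoneOn (fun q => ψ q * q ^ ((n : ℝ) / (m : ℝ))) (Set.Ioi 0))
    (hlim : Tendsto (fun q => ψ q * q ^ ((n : ℝ) / (m : ℝ))) atTop (nhds 0))
    (hdiv : ¬ Summable (fun q : ℕ => (q : ℝ) ^ (n - 1) * ψ q ^ m)) :
    ∃ ρ₀ : ℝ, 0 < ρ₀ ∧
      ∀ f : ℝ → ℝ,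
        (f = fun ρ => if ρ ≤ ρ₀ then
            ρ ^ (m * n) * Real.exp (∫ q in (1 : ℝ)..(ρ ^ (-(m : ℝ) / ((m : ℝ) + (n : ℝ)))),
              q ^ (n - 1) * ψ q ^ m)
          else
            ρ₀ ^ (m * n) * Real.exp (∫ q in (1 : ℝ)..(ρ₀ ^ (-(m : ℝ) / ((m : ℝ) + (n : ℝ)))),
              q ^ (n - 1) * ψ q ^ m)) →
        ((∀ ρ, 0 < ρ → 0 < f ρ) ∧ MonotoneOn f (Set.Ioi 0) ∧
            Tendsto f (nhdsWithin 0 (Set.Ioi 0)) (nhds 0)) ∧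
          ∀ γ : ℝ, 0 < γ →
            liminf (fun ρ => Real.log (f ρ / ρ ^ (m * n)) /
                (∫ q in (1 : ℝ)..(ρ ^ (-(m : ℝ) / ((m : ℝ) + (n : ℝ)))),
                  q ^ (n - 1) * (γ * ψ q) ^ m))
              (nhdsWithin 0 (Set.Ioi 0)) = γ ^ (-(m : ℤ)) :=
  stmt_18_general m n hm hn ψ hψpos hmono hlim
end
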